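/- arXiv:2204.09373 — 10 statements merged into one kernel-verified Lean document; each statement's English description precedes it below -/
import Mathlib

section
/- Let G be a group with a symmetric normal generating set S, let ‖·‖_S be the associated word norm and d_S the associated bi-invariant word metric. If f : G → ℝ is a partial quasimorphism relative to ‖·‖_S with defect D ≥ 0 and σ := sup_{s∈S} |f(s)| < ∞, then f is Lipschitz with constant σ + 2D: |f(g) − f(h)| ≤ (σ + 2D)·d_S(g,h) for all g,h ∈ G. -/
open Filter Topology

/-- The word norm associated to a generating set `S`:
the least length of an expression of `g` as a product of elements of `S`. -/
noncomputable def wordNorm {G : Type*} [Group G] (S : Set G) (g : G) : ℕ :=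
  sInf {n : ℕ | ∃ l : List G, (∀ s ∈ l, s ∈ S) ∧ l.length = n ∧ l.prod = g}

lemma wordNorm_one {G : Type*} [Group G] (S : Set G) : wordNorm S 1 = 0 := by
  have : (0 : ℕ) ∈ {n : ℕ | ∃ l : List G, (∀ s ∈ l, s ∈ S) ∧ l.length = n ∧ l.prod = 1} :=
    ⟨[], by simp⟩
  exact Nat.le_antisymm (Nat.sInf_le this) (Nat.zero_le _)

lemma wordNorm_mem_le {G : Type*} [Group G] {S : Set G} {s : G} (hs : s ∈ S) :
    wordNorm S s ≤ 1 := by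
  apply Nat.sInf_le
  exact ⟨[s], by simp [hs]⟩

/-- If `f` is a partial quasimorphism relative to the word norm of a symmetric normal
generating set `S` with defect `D ≥ 0`, and `|f| ≤ σ` on `S`, then `f` is Lipschitz
with constant `σ + 2D` with respect to the bi-invariant word metric `d_S(g,h) = ‖g h⁻¹‖_S`. -/
theorem lipschitz_of_partialQuasimorphism {G : Type*} [Group G] (S : Set G)
    (hgen : ∀ g : G, ∃ l : List G, (∀ s ∈ l, s ∈ S) ∧ l.prod = g)
    (hsym : ∀ s ∈ S, s⁻¹ ∈ S)
    (hnormal : ∀ (g : G), ∀ s ∈ S, g⁻¹ * s * g ∈ S)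
    (f : G → ℝ) (D : ℝ) (hD : 0 ≤ D)
    (hpqm : ∀ g h : G, |f g - f (g * h) + f h| ≤
      D * min (wordNorm S g : ℝ) (wordNorm S h : ℝ))
    (σ : ℝ) (hσ : ∀ s ∈ S, |f s| ≤ σ) :
    ∀ g h : G, |f g - f h| ≤ (σ + 2 * D) * (wordNorm S (g * h⁻¹) : ℝ) := by
  -- f 1 = 0
  have hf1 : f 1 = 0 := by
    have := hpqm 1 1
    rw [wordNorm_one] at this
    simp at this
    linarith [abs_nonneg (f 1), le_abs_self (f 1), neg_abs_le (f 1)]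
  -- key: for lists of generators
  have hlist : ∀ l : List G, (∀ s ∈ l, s ∈ S) → |f l.prod| ≤ (σ + D) * l.length := by
    intro l
    induction l with
    | nil => intro _; simp [hf1]
    | cons s t ih =>
      intro hmem
      have hsS : s ∈ S := hmem s (by simp)
      have htS : ∀ x ∈ t, x ∈ S := fun x hx => hmem x (by simp [hx])
      have h1 := hpqm s t.prod
      have hle1 : (wordNorm S s : ℝ) ≤ 1 := by
        exact_mod_cast wordNorm_mem_le hsS
      have hmin : min (wordNorm S s : ℝ) (wordNorm S t.prod : ℝ) ≤ 1 :=
        le_trans (min_le_left _ _) hle1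
      have h2 : |f s - f (s * t.prod) + f t.prod| ≤ D :=
        le_trans h1 (by nlinarith)
      have h3 := ih htS
      have hσs := hσ s hsS
      have h4 : |f (s * t.prod)| ≤ |f s| + |f t.prod| + D := by
        have := abs_sub_abs_le_abs_sub (f s + f t.prod) (f (s * t.prod))
        have habs : |f s + f t.prod| ≤ |f s| + |f t.prod| := abs_add_le _ _
        have : |f s + f t.prod - f (s * t.prod)| ≤ D := by
          have : f s + f t.prod - f (s * t.prod) = f s - f (s * t.prod) + f t.prod := by ring
          rw [this]; exact h2
        calc |f (s * t.prod)| ≤ |f s + f t.prod| + |f s + f t.prod - f (s * t.prod)| := by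
              have := abs_sub_le (f (s * t.prod)) (f s + f t.prod) 0
              simp [abs_sub_comm] at this ⊢
              linarith [abs_sub_le (f (s * t.prod)) (f s + f t.prod) 0,
                abs_sub_comm (f (s * t.prod)) (f s + f t.prod)]
          _ ≤ |f s| + |f t.prod| + D := by linarith
      simp only [List.prod_cons, List.length_cons]
      push_cast
      calc |f (s * t.prod)| ≤ |f s| + |f t.prod| + D := h4
        _ ≤ σ + (σ + D) * t.length + D := by linarith
        _ = (σ + D) * (t.length + 1) := by ring
  -- |f k| ≤ (σ + D) * wordNorm k
  have hkey : ∀ k : G, |f k| ≤ (σ + D) * (wordNorm S k : ℝ) := by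
    intro k
    obtain ⟨l, hl, hlp⟩ := hgen k
    have hne : {n : ℕ | ∃ l : List G, (∀ s ∈ l, s ∈ S) ∧ l.length = n ∧ l.prod = k}.Nonempty :=
      ⟨l.length, l, hl, rfl, hlp⟩
    obtain ⟨m, hm, hmlen, hmp⟩ := Nat.sInf_mem hne
    have hwn : wordNorm S k = m.length := hmlen.symm
    calc |f k| = |f m.prod| := by rw [hmp]
      _ ≤ (σ + D) * (m.length : ℝ) := hlist m hm
      _ = (σ + D) * (wordNorm S k : ℝ) := by rw [hwn]
  intro g h
  have h1 := hpqm (g * h⁻¹) h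
  have h2 : (g * h⁻¹) * h = g := by group
  rw [h2] at h1
  have h3 : min (wordNorm S (g * h⁻¹) : ℝ) (wordNorm S h : ℝ) ≤ (wordNorm S (g * h⁻¹) : ℝ) :=
    min_le_left _ _
  have h4 : |f (g * h⁻¹) - f g + f h| ≤ D * (wordNorm S (g * h⁻¹) : ℝ) :=
    le_trans h1 (by nlinarith)
  have h5 := hkey (g * h⁻¹)
  have := abs_sub_abs_le_abs_sub (f g - f h) (f (g * h⁻¹) - f g + f h - (f g - f h))
  calc |f g - f h| = |f (g * h⁻¹) - (f (g * h⁻¹) - f g + f h)| := by ring_nf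
    _ ≤ |f (g * h⁻¹)| + |f (g * h⁻¹) - f g + f h| := abs_sub _ _
    _ ≤ (σ + D) * (wordNorm S (g * h⁻¹) : ℝ) + D * (wordNorm S (g * h⁻¹) : ℝ) := by linarith
    _ = (σ + 2 * D) * (wordNorm S (g * h⁻¹) : ℝ) := by ring
end

section
/- Let G be a group with a symmetric normal generating set S and associated word norm ‖·‖_S. Suppose f : G → ℝ is a homogeneous partial quasimorphism relative to ‖·‖_S with defect D ≥ 0, with σ := sup_{s∈S} |f(s)| < ∞, and g ∈ G satisfies |f(g)| > 0. Then g is undistorted: ‖gⁿ‖_S ≥ (|f(g)|/(σ + D))·n for all n ∈ ℕ. -/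
open Filter Topology

/-- If `f` is a homogeneous partial quasimorphism relative to the word norm of a symmetric
normal generating set `S` with defect `D ≥ 0`, `|f| ≤ σ` on `S`, and `|f(g)| > 0`, then
`g` is undistorted: `‖gⁿ‖_S ≥ (|f(g)|/(σ + D))·n` for all `n ∈ ℕ`. -/
theorem undistorted_of_detected {G : Type*} [Group G] (S : Set G)
    (hgen : ∀ g : G, ∃ l : List G, (∀ s ∈ l, s ∈ S) ∧ l.prod = g)
    (hsym : ∀ s ∈ S, s⁻¹ ∈ S)
    (hnormal : ∀ (g : G), ∀ s ∈ S, g⁻¹ * s * g ∈ S)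
    (f : G → ℝ) (D : ℝ) (hD : 0 ≤ D)
    (hhom : ∀ (x : G) (n : ℕ), f (x ^ n) = n * f x)
    (hpqm : ∀ g h : G, |f g - f (g * h) + f h| ≤
      D * min (wordNorm S g : ℝ) (wordNorm S h : ℝ))
    (σ : ℝ) (hσ : ∀ s ∈ S, |f s| ≤ σ)
    (g : G) (hg : 0 < |f g|) :
    ∀ n : ℕ, (|f g| / (σ + D)) * n ≤ (wordNorm S (g ^ n) : ℝ) := by

  have hf1 : f 1 = 0 := by simpa using hhom 1 0
  -- bound on products of generators
  have key : ∀ l : List G, (∀ s ∈ l, s ∈ S) → |f l.prod| ≤ l.length * (σ + D) := by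
    intro l
    induction l with
    | nil => intro _; simp [hf1]
    | cons s l ih =>
      intro hl
      have hs : s ∈ S := hl s (by simp)
      have hmem : ∀ t ∈ l, t ∈ S := fun t ht => hl t (by simp [ht])
      have ihl := ih hmem
      have hws : (wordNorm S s : ℝ) ≤ 1 := by
        have : wordNorm S s ≤ 1 := Nat.sInf_le ⟨[s], by simp [hs]⟩
        exact_mod_cast this
      have h2 : |f s - f (s * l.prod) + f l.prod| ≤ D := by
        refine (hpqm s l.prod).trans ?_
        calc D * min (wordNorm S s : ℝ) (wordNorm S l.prod : ℝ)
            ≤ D * (wordNorm S s : ℝ) :=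
              mul_le_mul_of_nonneg_left (min_le_left _ _) hD
          _ ≤ D * 1 := mul_le_mul_of_nonneg_left hws hD
          _ = D := mul_one D
      have hσs := hσ s hs
      have htri : |f (s * l.prod)| ≤ |f s| + |f l.prod| + D := by
        have h3 : f (s * l.prod) = (f s + f l.prod) - (f s - f (s * l.prod) + f l.prod) := by
          ring
        calc |f (s * l.prod)|
            = |(f s + f l.prod) - (f s - f (s * l.prod) + f l.prod)| := by rw [← h3]
          _ ≤ |f s + f l.prod| + |f s - f (s * l.prod) + f l.prod| := abs_sub _ _
          _ ≤ (|f s| + |f l.prod|) + D := add_le_add (abs_add_le _ _) h2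
          _ = |f s| + |f l.prod| + D := by ring
      have hfs : |f s| ≤ σ := hσs
      simp only [List.prod_cons, List.length_cons]
      push_cast
      calc |f (s * l.prod)| ≤ |f s| + |f l.prod| + D := htri
        _ ≤ σ + l.length * (σ + D) + D := by linarith
        _ = (l.length + 1) * (σ + D) := by ring
  have keyN : ∀ x : G, |f x| ≤ (wordNorm S x : ℝ) * (σ + D) := by
    intro x
    obtain ⟨l, hl, hprod⟩ := hgen x
    have hne : {n : ℕ | ∃ l : List G, (∀ s ∈ l, s ∈ S) ∧ l.length = n ∧ l.prod = x}.Nonempty :=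
      ⟨l.length, l, hl, rfl, hprod⟩
    obtain ⟨l', hl', hlen, hprod'⟩ := Nat.sInf_mem hne
    have := key l' hl'
    rw [hprod', hlen] at this
    exact this
  have hpos : 0 < σ + D := by
    by_contra h
    push_neg at h
    have h1 := keyN g
    have h2 : (wordNorm S g : ℝ) * (σ + D) ≤ 0 :=
      mul_nonpos_of_nonneg_of_nonpos (Nat.cast_nonneg _) h
    linarith
  intro n
  have h1 := keyN (g ^ n)
  rw [hhom g n, abs_mul, Nat.abs_cast] at h1
  rw [div_mul_eq_mul_div, div_le_iff₀ hpos]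
  nlinarith [Nat.cast_nonneg (α := ℝ) n]
end

section
/- Let G be a group with a symmetric normal generating set S and associated word norm ‖·‖_S. If g ∈ G is undistorted with respect to ‖·‖_S, then there exists a function f : G → ℝ which is antisymmetric, homogeneous, a partial quasimorphism relative to ‖·‖_S (for some defect D ≥ 0), bounded on S, and satisfies f(g) > 0. -/
/-!
The Busemann function `β x = lim (ν (x gⁿ) - ν (gⁿ))` of the ray `n ↦ gⁿ`, with the limit taken as
a shift-invariant Banach limit, satisfies `|β a - β b| ≤ ν (a b⁻¹)` and `β (g^(±m)) = ±m β g`;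
moreover `β g ≥ C > 0`, because the Cesàro means of the increments `ν (gⁿ⁺¹) - ν (gⁿ)` telescope
to `ν (gⁿ) / n`. Homogenizing, `H x = limsup β (xᵐ) / m`, keeps the Lipschitz bound since
`ν (aᵐ b⁻ᵐ) ≤ m ν (a b⁻¹)` for a conjugation-invariant `ν`, and `f x = (H x - H x⁻¹) / 2` is
antisymmetric. A function with `f 1 = 0` that is 1-Lipschitz for the bi-invariant metric is a
partial quasimorphism: `f (x y)` differs from `f x` by at most `ν y` and from `f y` by at most
`ν x`.
-/

open Filter Topology

section WordNorm

variable {G : Type*} [Group G] {S : Set G}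

theorem wordNorm_le_length {l : List G} (hl : ∀ s ∈ l, s ∈ S) : wordNorm S l.prod ≤ l.length :=
  Nat.sInf_le ⟨l, hl, rfl, rfl⟩

theorem exists_list_length_eq_wordNorm (hgen : ∀ g : G, ∃ l : List G, (∀ s ∈ l, s ∈ S) ∧ l.prod = g)
    (x : G) : ∃ l : List G, (∀ s ∈ l, s ∈ S) ∧ l.length = wordNorm S x ∧ l.prod = x := by
  obtain ⟨l, hl, rfl⟩ := hgen x
  exact Nat.sInf_mem
    (s := {n | ∃ l' : List G, (∀ s ∈ l', s ∈ S) ∧ l'.length = n ∧ l'.prod = l.prod})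
    ⟨l.length, l, hl, rfl, rfl⟩

variable (hgen : ∀ g : G, ∃ l : List G, (∀ s ∈ l, s ∈ S) ∧ l.prod = g)
include hgen

theorem wordNorm_mul_le (x y : G) : wordNorm S (x * y) ≤ wordNorm S x + wordNorm S y := by
  obtain ⟨l, hl, hlen, rfl⟩ := exists_list_length_eq_wordNorm hgen x
  obtain ⟨l', hl', hlen', rfl⟩ := exists_list_length_eq_wordNorm hgen y
  rw [← hlen, ← hlen', ← List.length_append, ← List.prod_append]
  exact wordNorm_le_length fun s hs => (List.mem_append.1 hs).elim (hl s) (hl' s)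

theorem wordNorm_map_le (φ : G →* G) (hφ : ∀ s ∈ S, φ s ∈ S) (x : G) :
    wordNorm S (φ x) ≤ wordNorm S x := by
  obtain ⟨l, hl, hlen, rfl⟩ := exists_list_length_eq_wordNorm hgen x
  rw [← hlen, map_list_prod, ← List.length_map φ]
  exact wordNorm_le_length fun s hs => by
    obtain ⟨t, ht, rfl⟩ := List.mem_map.1 hs
    exact hφ t (hl t ht)

theorem wordNorm_inv (hsym : ∀ s ∈ S, s⁻¹ ∈ S) (x : G) : wordNorm S x⁻¹ = wordNorm S x := by
  have key (y : G) : wordNorm S y⁻¹ ≤ wordNorm S y := by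
    obtain ⟨l, hl, hlen, rfl⟩ := exists_list_length_eq_wordNorm hgen y
    rw [← hlen, List.prod_inv_reverse, ← List.length_map (·⁻¹), ← List.length_reverse]
    exact wordNorm_le_length fun s hs => by
      obtain ⟨t, ht, rfl⟩ := List.mem_map.1 (List.mem_reverse.1 hs)
      exact hsym t (hl t ht)
  exact (key x).antisymm (by simpa using key x⁻¹)

theorem wordNorm_mul_comm (hnormal : ∀ (g : G), ∀ s ∈ S, g⁻¹ * s * g ∈ S) (x y : G) :
    wordNorm S (x * y) = wordNorm S (y * x) := by
  have key (a b : G) : wordNorm S (b * a) ≤ wordNorm S (a * b) := by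
    have h := wordNorm_map_le hgen (MulAut.conj a⁻¹).toMonoidHom
      (fun s hs => by simpa using hnormal a s hs) (a * b)
    simpa [mul_assoc] using h
  exact (key y x).antisymm (key x y)

noncomputable def wordNormSeminorm (hsym : ∀ s ∈ S, s⁻¹ ∈ S) : GroupSeminorm G where
  toFun x := wordNorm S x
  map_one' := by
    simpa using wordNorm_le_length (S := S) (l := []) (by simp)
  mul_le' x y := by exact_mod_cast wordNorm_mul_le hgen x y
  inv' x := by rw [wordNorm_inv hgen hsym]

@[simp]
theorem wordNormSeminorm_apply (hsym : ∀ s ∈ S, s⁻¹ ∈ S) (x : G) :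
    wordNormSeminorm hgen hsym x = wordNorm S x :=
  rfl

end WordNorm

section Seminorm

variable {G : Type*} [Group G] (ν : GroupSeminorm G)

theorem GroupSeminorm.map_pow_le (x : G) (n : ℕ) : ν (x ^ n) ≤ n * ν x := by
  induction n with
  | zero => simp
  | succ n ih =>
    calc ν (x ^ (n + 1)) ≤ ν (x ^ n) + ν x := by rw [pow_succ]; exact map_mul_le_add ν _ _
      _ ≤ (n + 1 : ℕ) * ν x := by push_cast; linarith

theorem GroupSeminorm.map_pow_div_pow_le (hcomm : ∀ a b, ν (a * b) = ν (b * a)) (a b : G)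
    (n : ℕ) : ν (a ^ n / b ^ n) ≤ n * ν (a / b) := by
  induction n with
  | zero => simp
  | succ n ih =>
    calc ν (a ^ (n + 1) / b ^ (n + 1)) = ν (a * (a ^ n / b ^ n * a⁻¹) * (a / b)) := by
          simp only [pow_succ', div_eq_mul_inv, mul_inv_rev, mul_assoc, inv_mul_cancel_left]
      _ ≤ ν (a * (a ^ n / b ^ n * a⁻¹)) + ν (a / b) := map_mul_le_add ν _ _
      _ = ν (a ^ n / b ^ n) + ν (a / b) := by rw [hcomm, inv_mul_cancel_right]
      _ ≤ (n + 1 : ℕ) * ν (a / b) := by push_cast; linarith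

theorem GroupSeminorm.map_inv_div_inv (hcomm : ∀ a b, ν (a * b) = ν (b * a)) (a b : G) :
    ν (a⁻¹ / b⁻¹) = ν (a / b) := by
  rw [div_inv_eq_mul, hcomm, ← map_inv_eq_map ν, mul_inv_rev, inv_inv, div_eq_mul_inv]

end Seminorm

section BanachLimit

open Finset

noncomputable def cesaroMean (u : ℕ → ℝ) (n : ℕ) : ℝ := (n : ℝ)⁻¹ * ∑ i ∈ range n, u i

noncomputable def banachLimit (u : ℕ → ℝ) : ℝ :=
  limUnder (hyperfilter ℕ : Filter ℕ) (cesaroMean u)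

variable {u v : ℕ → ℝ} {B B' : ℝ}

theorem abs_cesaroMean_le (hu : ∀ n, |u n| ≤ B) (n : ℕ) : |cesaroMean u n| ≤ B := by
  rcases n.eq_zero_or_pos with rfl | hn
  · simpa [cesaroMean] using (abs_nonneg _).trans (hu 0)
  have hn' : (0 : ℝ) < n := by exact_mod_cast hn
  rw [cesaroMean, abs_mul, abs_inv, abs_of_pos hn', inv_mul_le_iff₀ hn']
  calc |∑ i ∈ range n, u i| ≤ ∑ i ∈ range n, |u i| := abs_sum_le_sum_abs _ _
    _ ≤ ∑ _i ∈ range n, B := sum_le_sum fun i _ => hu i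
    _ = n * B := by simp

theorem tendsto_cesaroMean_banachLimit (hu : ∀ n, |u n| ≤ B) :
    Tendsto (cesaroMean u) (hyperfilter ℕ : Filter ℕ) (𝓝 (banachLimit u)) := by
  refine tendsto_nhds_limUnder ?_
  have hIcc : ↑((hyperfilter ℕ).map (cesaroMean u)) ≤ 𝓟 (Set.Icc (-B) B) := by
    rw [Ultrafilter.coe_map, le_principal_iff]
    exact mem_map.2 (univ_mem' fun n => abs_le.1 (abs_cesaroMean_le hu n))
  obtain ⟨x, -, hx⟩ := isCompact_Icc.ultrafilter_le_nhds _ hIcc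
  exact ⟨x, hx⟩

theorem abs_banachLimit_le (hu : ∀ n, |u n| ≤ B) : |banachLimit u| ≤ B :=
  le_of_tendsto' (tendsto_cesaroMean_banachLimit hu).abs (abs_cesaroMean_le hu)

theorem banachLimit_add (hu : ∀ n, |u n| ≤ B) (hv : ∀ n, |v n| ≤ B') :
    banachLimit (u + v) = banachLimit u + banachLimit v := by
  have huv (n : ℕ) : |(u + v) n| ≤ B + B' := (abs_add_le _ _).trans (add_le_add (hu n) (hv n))
  refine tendsto_nhds_unique (tendsto_cesaroMean_banachLimit huv) ?_
  convert (tendsto_cesaroMean_banachLimit hu).add (tendsto_cesaroMean_banachLimit hv) using 1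
  ext n
  simp [cesaroMean, sum_add_distrib, mul_add]

theorem banachLimit_neg (hu : ∀ n, |u n| ≤ B) : banachLimit (-u) = -banachLimit u := by
  have hu' (n : ℕ) : |(-u) n| ≤ B := by simpa using hu n
  refine tendsto_nhds_unique (tendsto_cesaroMean_banachLimit hu') ?_
  convert (tendsto_cesaroMean_banachLimit hu).neg using 1
  ext n
  simp [cesaroMean]

theorem banachLimit_sub (hu : ∀ n, |u n| ≤ B) (hv : ∀ n, |v n| ≤ B') :
    banachLimit (u - v) = banachLimit u - banachLimit v := by
  have hv' (n : ℕ) : |(-v) n| ≤ B' := by simpa using hv n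
  rw [sub_eq_add_neg, banachLimit_add hu hv', banachLimit_neg hv, sub_eq_add_neg]

theorem banachLimit_comp_succ (hu : ∀ n, |u n| ≤ B) :
    banachLimit (fun n => u (n + 1)) = banachLimit u := by
  have hu' (n : ℕ) : |u (n + 1)| ≤ B := hu (n + 1)
  refine tendsto_nhds_unique (tendsto_cesaroMean_banachLimit hu') ?_
  -- the two Cesàro means differ by `(u n - u 0) / n`
  have hdiff : Tendsto (fun n : ℕ => (n : ℝ)⁻¹ * (u n - u 0)) atTop (𝓝 0) := by
    refine squeeze_zero_norm (fun n => ?_) (tendsto_const_div_atTop_nhds_zero_nat (2 * B))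
    rw [norm_mul, norm_inv, Real.norm_natCast, ← div_eq_inv_mul, Real.norm_eq_abs]
    gcongr
    linarith [abs_sub (u n) (u 0), hu n, hu 0]
  convert (tendsto_cesaroMean_banachLimit hu).add (hdiff.mono_left Nat.hyperfilter_le_atTop)
    using 1
  · ext n
    simp only [cesaroMean, ← mul_add]
    congr 1
    linarith [sum_range_succ' u n, sum_range_succ u n]
  · simp

theorem banachLimit_comp_add (hu : ∀ n, |u n| ≤ B) (m : ℕ) :
    banachLimit (fun n => u (n + m)) = banachLimit u := by
  induction m with
  | zero => rfl
  | succ m ih =>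
    rw [← ih, ← banachLimit_comp_succ (u := fun n => u (n + m)) fun n => hu _]
    simp only [add_right_comm _ 1 m, add_assoc]

end BanachLimit

section Limsup

theorem isBoundedUnder_of_abs_le {α : Type*} {f : Filter α} {u : α → ℝ} {B : ℝ}
    (h : ∀ a, |u a| ≤ B) : IsBoundedUnder (· ≤ ·) f u ∧ IsBoundedUnder (· ≥ ·) f u :=
  ⟨isBoundedUnder_of ⟨B, fun a => (abs_le.1 (h a)).2⟩,
    isBoundedUnder_of ⟨-B, fun a => (abs_le.1 (h a)).1⟩⟩

theorem limsup_add_of_tendsto_zero {u e : ℕ → ℝ} {B : ℝ} (hu : ∀ m, |u m| ≤ B)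
    (he : Tendsto e atTop (𝓝 0)) : limsup (u + e) atTop = limsup u atTop := by
  obtain ⟨hu₁, hu₂⟩ := isBoundedUnder_of_abs_le (f := atTop) hu
  apply le_antisymm
  · calc limsup (u + e) atTop ≤ limsup u atTop + limsup e atTop :=
          limsup_add_le hu₂ hu₁ he.isBoundedUnder_ge.isCoboundedUnder_le he.isBoundedUnder_le
      _ = limsup u atTop := by rw [he.limsup_eq, add_zero]
  · calc limsup u atTop = limsup u atTop + liminf e atTop := by rw [he.liminf_eq, add_zero]
      _ ≤ limsup (u + e) atTop :=
          le_limsup_add hu₁ hu₂.isCoboundedUnder_le he.isBoundedUnder_le he.isBoundedUnder_ge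

theorem limsup_comp_mul_of_tendsto_sub {b : ℕ → ℝ} {B : ℝ} (hb : ∀ m, |b m| ≤ B) {k : ℕ}
    (hk : 0 < k) (h : Tendsto (fun m => b m - b (k * (m / k))) atTop (𝓝 0)) :
    limsup (fun m => b (k * m)) atTop = limsup b atTop := by
  calc limsup (fun m => b (k * m)) atTop
      = limsup (fun m => b (k * m)) (map (· / k) atTop) := by rw [map_div_atTop_eq_nat k hk]
    _ = limsup ((fun m => b (k * (m / k))) + fun m => b m - b (k * (m / k))) atTop :=
        (limsup_add_of_tendsto_zero (fun m => hb _) h).symm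
    _ = limsup b atTop := by congr 1; ext m; simp

variable {u : ℕ → ℝ} {L : ℝ}

theorem abs_div_sub_div_le (hu : ∀ n m, n ≤ m → |u m - u n| ≤ L * (m - n)) (hu0 : u 0 = 0)
    {n m : ℕ} (hn : 0 < n) (hnm : n ≤ m) : |u m / m - u n / n| ≤ 2 * L * (m - n) / m := by
  have hn' : (0 : ℝ) < n := by exact_mod_cast hn
  have hm' : (0 : ℝ) < m := by exact_mod_cast hn.trans_le hnm
  have hnm' : (n : ℝ) ≤ m := by exact_mod_cast hnm
  have hun : |u n| ≤ L * n := by simpa [hu0] using hu 0 n n.zero_le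
  have hsplit : u m / m - u n / n = (u m - u n) / m - u n / n * ((m - n) / m) := by
    field_simp; ring
  have h₂ : |u n / n * ((m - n) / m)| ≤ L * ((m - n) / m) := by
    rw [abs_mul, abs_of_nonneg (by positivity : (0 : ℝ) ≤ (m - n) / m), abs_div, abs_of_pos hn']
    gcongr
    rwa [div_le_iff₀ hn']
  calc |u m / m - u n / n| ≤ |(u m - u n) / m| + |u n / n * ((m - n) / m)| := by
        rw [hsplit]; exact abs_sub _ _
    _ ≤ L * (m - n) / m + L * ((m - n) / m) := by
        gcongr
        rw [abs_div, abs_of_pos hm']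
        gcongr
        exact hu n m hnm
    _ = 2 * L * (m - n) / m := by ring

theorem tendsto_div_sub_div_mul_div (hu : ∀ n m, n ≤ m → |u m - u n| ≤ L * (m - n))
    (hu0 : u 0 = 0) {k : ℕ} (hk : 0 < k) :
    Tendsto (fun m : ℕ => u m / m - u (k * (m / k)) / (k * (m / k) : ℕ)) atTop (𝓝 0) := by
  refine squeeze_zero_norm' ?_ (tendsto_const_div_atTop_nhds_zero_nat (2 * L * k))
  filter_upwards [eventually_ge_atTop k] with m hkm
  have hpos : 0 < k * (m / k) := Nat.mul_pos hk (Nat.div_pos hkm hk)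
  have hlt : ((m : ℕ) : ℝ) - (k * (m / k) : ℕ) ≤ k := by
    have := Nat.lt_mul_div_succ m hk
    have : m ≤ k * (m / k) + k := by rw [Nat.mul_succ] at this; omega
    have : (m : ℝ) ≤ (k * (m / k) : ℕ) + k := by exact_mod_cast this
    linarith
  have hL : 0 ≤ L := by
    simpa [hu0] using (abs_nonneg _).trans (hu 0 1 zero_le_one)
  rw [Real.norm_eq_abs]
  refine (abs_div_sub_div_le hu hu0 hpos (Nat.mul_div_le m k)).trans ?_
  gcongr

theorem limsup_map_mul_div (hu : ∀ n m, n ≤ m → |u m - u n| ≤ L * (m - n)) (hu0 : u 0 = 0)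
    {k : ℕ} (hk : 0 < k) :
    limsup (fun m : ℕ => u (k * m) / m) atTop = k * limsup (fun m : ℕ => u m / m) atTop := by
  have hb (m : ℕ) : |u m / m| ≤ L := by
    rcases m.eq_zero_or_pos with rfl | hm
    · simpa [hu0] using (abs_nonneg _).trans (hu 0 1 zero_le_one)
    have hm' : (0 : ℝ) < m := by exact_mod_cast hm
    rw [abs_div, Nat.abs_cast, div_le_iff₀ hm']
    simpa [hu0] using hu 0 m m.zero_le
  have hscale : (fun m : ℕ => u (k * m) / m) = fun m => (k : ℝ) * (u (k * m) / (k * m : ℕ)) := by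
    ext m
    rcases eq_or_ne (m : ℝ) 0 with hm | hm
    · simp [hm]
    · have : (k : ℝ) ≠ 0 := by exact_mod_cast hk.ne'
      push_cast
      field_simp
  obtain ⟨hb₁, hb₂⟩ := isBoundedUnder_of_abs_le (f := atTop) fun m => hb (k * m)
  rw [hscale, ← limsup_comp_mul_of_tendsto_sub hb hk (tendsto_div_sub_div_mul_div hu hu0 hk)]
  exact ((monotone_mul_left_of_nonneg k.cast_nonneg).map_limsup_of_continuousAt _
    (continuous_const_mul _).continuousAt hb₁ hb₂.isCoboundedUnder_le).symm

end Limsup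

section Busemann

variable {G : Type*} [Group G] (ν : GroupSeminorm G) (g : G)

noncomputable def busemann (x : G) : ℝ :=
  banachLimit fun n => ν (x * g ^ n) - ν (g ^ n)

theorem abs_map_mul_sub_map_le (x y : G) : |ν (x * y) - ν y| ≤ ν x := by
  simpa using abs_sub_map_le_div ν (x * y) y

theorem abs_busemann_sub_le (a b : G) : |busemann ν g a - busemann ν g b| ≤ ν (a / b) := by
  rw [busemann, busemann, ← banachLimit_sub (fun n => abs_map_mul_sub_map_le ν a _)
    (fun n => abs_map_mul_sub_map_le ν b _)]
  refine abs_banachLimit_le fun n => ?_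
  simpa [mul_div_mul_right_eq_div] using abs_sub_map_le_div ν (a * g ^ n) (b * g ^ n)

theorem busemann_one : busemann ν g 1 = 0 :=
  abs_nonpos_iff.1 (abs_banachLimit_le fun n => by simp)

theorem busemann_pow (m : ℕ) : busemann ν g (g ^ m) = m * busemann ν g g := by
  induction m with
  | zero => simp [busemann_one]
  | succ m ih =>
    have hsplit : (fun n => ν (g ^ (m + 1) * g ^ n) - ν (g ^ n)) =
        (fun n => ν (g ^ m * g ^ (n + 1)) - ν (g ^ (n + 1))) +
          fun n => ν (g * g ^ n) - ν (g ^ n) := by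
      ext n
      simp only [Pi.add_apply, ← pow_add, ← pow_succ']
      ring_nf
    rw [busemann, hsplit, banachLimit_add (fun n => abs_map_mul_sub_map_le ν _ _)
      (fun n => abs_map_mul_sub_map_le ν _ _), banachLimit_comp_succ
      (fun n => abs_map_mul_sub_map_le ν _ _), ← busemann, ← busemann, ih]
    push_cast
    ring

theorem busemann_inv_pow (m : ℕ) : busemann ν g (g ^ m)⁻¹ = -(m * busemann ν g g) := by
  have hshift : (fun n => ν ((g ^ m)⁻¹ * g ^ (n + m)) - ν (g ^ (n + m))) =
      -fun n => ν (g ^ m * g ^ n) - ν (g ^ n) := by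
    ext n
    rw [add_comm n m, pow_add, inv_mul_cancel_left]
    simp
  rw [busemann, ← banachLimit_comp_add (fun n => abs_map_mul_sub_map_le ν _ _) m, hshift,
    banachLimit_neg (fun n => abs_map_mul_sub_map_le ν _ _), ← busemann, busemann_pow]

theorem le_busemann {C : ℝ} (hg : ∀ n : ℕ, C * n ≤ ν (g ^ n)) : C ≤ busemann ν g g := by
  refine ge_of_tendsto (tendsto_cesaroMean_banachLimit fun n => abs_map_mul_sub_map_le ν g _)
    (Eventually.filter_mono Nat.hyperfilter_le_atTop ?_)
  filter_upwards [eventually_gt_atTop 0] with n hn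
  have hn' : (0 : ℝ) < n := by exact_mod_cast hn
  have htel : ∑ i ∈ Finset.range n, (ν (g * g ^ i) - ν (g ^ i)) = ν (g ^ n) := by
    simpa [← pow_succ'] using Finset.sum_range_sub (fun i => ν (g ^ i)) n
  rw [cesaroMean, htel, ← div_eq_inv_mul, le_div_iff₀ hn']
  exact hg n

end Busemann

section Homogenization

variable {G : Type*} [Group G] (ν : GroupSeminorm G) (hcomm : ∀ a b, ν (a * b) = ν (b * a))
  {φ : G → ℝ} (hφ : ∀ a b, |φ a - φ b| ≤ ν (a / b)) (hφ1 : φ 1 = 0)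

noncomputable def homogenization (φ : G → ℝ) (x : G) : ℝ :=
  limsup (fun m : ℕ => φ (x ^ m) / m) atTop

include hcomm hφ in
theorem abs_map_pow_div_sub_le (a b : G) (m : ℕ) :
    |φ (a ^ m) / m - φ (b ^ m) / m| ≤ ν (a / b) := by
  rcases m.eq_zero_or_pos with rfl | hm
  · simp
  have hm' : (0 : ℝ) < m := by exact_mod_cast hm
  rw [← sub_div, abs_div, Nat.abs_cast, div_le_iff₀ hm', mul_comm]
  exact (hφ _ _).trans (ν.map_pow_div_pow_le hcomm a b m)

include hcomm hφ hφ1 in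
theorem abs_map_pow_div_le (x : G) (m : ℕ) : |φ (x ^ m) / m| ≤ ν x := by
  simpa [hφ1] using abs_map_pow_div_sub_le ν hcomm hφ x 1 m

include hcomm hφ hφ1 in
theorem abs_homogenization_sub_le (a b : G) :
    |homogenization φ a - homogenization φ b| ≤ ν (a / b) := by
  have key (a b : G) : homogenization φ a ≤ homogenization φ b + ν (a / b) := by
    obtain ⟨ha₁, ha₂⟩ := isBoundedUnder_of_abs_le (f := atTop) (abs_map_pow_div_le ν hcomm hφ hφ1 a)
    obtain ⟨hb₁, hb₂⟩ := isBoundedUnder_of_abs_le (f := atTop) (abs_map_pow_div_le ν hcomm hφ hφ1 b)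
    calc homogenization φ a ≤ limsup (fun m : ℕ => φ (b ^ m) / m + ν (a / b)) atTop :=
          limsup_le_limsup (Eventually.of_forall fun m =>
            sub_le_iff_le_add'.1 (abs_sub_le_iff.1 (abs_map_pow_div_sub_le ν hcomm hφ a b m)).1)
            ha₂.isCoboundedUnder_le (isBoundedUnder_le_add hb₁ isBoundedUnder_const)
      _ = homogenization φ b + ν (a / b) :=
          limsup_add_const atTop _ _ hb₁ hb₂.isCoboundedUnder_le
  rw [abs_sub_le_iff]
  exact ⟨sub_left_le_of_le_add (key a b), sub_left_le_of_le_add (map_div_rev ν a b ▸ key b a)⟩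

include hφ hφ1 in
theorem homogenization_pow (x : G) (k : ℕ) : homogenization φ (x ^ k) = k * homogenization φ x := by
  rcases k.eq_zero_or_pos with rfl | hk
  · simp [homogenization, hφ1]
  have hlip (n m : ℕ) (hnm : n ≤ m) : |φ (x ^ m) - φ (x ^ n)| ≤ ν x * (m - n) := by
    calc |φ (x ^ m) - φ (x ^ n)| ≤ ν (x ^ (m - n)) := by
          rw [pow_sub x hnm, ← div_eq_mul_inv]; exact hφ _ _
      _ ≤ ν x * (m - n) := by
          rw [mul_comm, ← Nat.cast_sub hnm]; exact ν.map_pow_le x _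
  simpa only [homogenization, ← pow_mul] using
    limsup_map_mul_div (u := fun m => φ (x ^ m)) hlip (by simpa using hφ1) hk

theorem homogenization_eq_of_map_pow {x : G} {c : ℝ} (h : ∀ m : ℕ, φ (x ^ m) = m * c) :
    homogenization φ x = c := by
  have hc : (fun m : ℕ => φ (x ^ m) / m) =ᶠ[atTop] fun _ => c := by
    filter_upwards [eventually_gt_atTop 0] with m hm
    rw [h, mul_div_cancel_left₀ _ (Nat.cast_ne_zero.2 hm.ne')]
  rw [homogenization, limsup_congr hc, limsup_const]

end Homogenization

section Main

variable {G : Type*} [Group G] (ν : GroupSeminorm G) (hcomm : ∀ a b, ν (a * b) = ν (b * a))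
include hcomm

theorem exists_antisymmetric_homogeneous_lipschitz {g : G} {C : ℝ} (hC : 0 < C)
    (hg : ∀ n : ℕ, C * n ≤ ν (g ^ n)) :
    ∃ f : G → ℝ, (∀ x, f x⁻¹ = -f x) ∧ (∀ (x : G) (n : ℕ), f (x ^ n) = n * f x) ∧
      (∀ a b, |f a - f b| ≤ ν (a / b)) ∧ 0 < f g := by
  have hβ := abs_busemann_sub_le ν g
  have hβ1 := busemann_one ν g
  have hHg : homogenization (busemann ν g) g = busemann ν g g :=
    homogenization_eq_of_map_pow (busemann_pow ν g)
  have hHg' : homogenization (busemann ν g) g⁻¹ = -busemann ν g g :=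
    homogenization_eq_of_map_pow fun m => by rw [inv_pow, busemann_inv_pow]; ring
  refine ⟨fun x => (homogenization (busemann ν g) x - homogenization (busemann ν g) x⁻¹) / 2,
    fun x => ?_, fun x n => ?_, fun a b => ?_, ?_⟩
  · simp only [inv_inv]; ring
  · simp only [← inv_pow, homogenization_pow ν hβ hβ1]; ring
  · have h₁ := abs_homogenization_sub_le ν hcomm hβ hβ1 a b
    have h₂ := abs_homogenization_sub_le ν hcomm hβ hβ1 a⁻¹ b⁻¹
    rw [ν.map_inv_div_inv hcomm] at h₂
    rw [abs_le] at h₁ h₂ ⊢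
    constructor <;> linarith
  · simp only [hHg, hHg']
    linarith [le_busemann ν g hg]

theorem abs_sub_map_mul_add_le {f : G → ℝ} (hf : ∀ a b, |f a - f b| ≤ ν (a / b)) (hf1 : f 1 = 0)
    (x y : G) : |f x - f (x * y) + f y| ≤ 2 * min (ν x) (ν y) := by
  have hx : |f x| ≤ ν x := by simpa [hf1] using hf x 1
  have hy : |f y| ≤ ν y := by simpa [hf1] using hf y 1
  have hxy_y : |f (x * y) - f y| ≤ ν x := by simpa using hf (x * y) y
  have hxy_x : |f (x * y) - f x| ≤ ν y := by
    simpa [div_eq_mul_inv, mul_assoc, hcomm x] using hf (x * y) x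
  rw [mul_min_of_nonneg _ _ zero_le_two]
  refine le_min ?_ ?_
  · calc |f x - f (x * y) + f y| = |f x - (f (x * y) - f y)| := by ring_nf
      _ ≤ |f x| + |f (x * y) - f y| := abs_sub _ _
      _ ≤ 2 * ν x := by linarith
  · calc |f x - f (x * y) + f y| = |f y - (f (x * y) - f x)| := by ring_nf
      _ ≤ |f y| + |f (x * y) - f x| := abs_sub _ _
      _ ≤ 2 * ν y := by linarith

end Main

/-- If `g` is undistorted with respect to the word norm of a symmetric normal generating
set `S`, then there is an antisymmetric homogeneous partial quasimorphism relative to the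
word norm which is bounded on `S` and positive on `g`. -/
theorem exists_detecting_partialQuasimorphism {G : Type*} [Group G] (S : Set G)
    (hgen : ∀ g : G, ∃ l : List G, (∀ s ∈ l, s ∈ S) ∧ l.prod = g)
    (hsym : ∀ s ∈ S, s⁻¹ ∈ S)
    (hnormal : ∀ (g : G), ∀ s ∈ S, g⁻¹ * s * g ∈ S)
    (g : G)
    (hundist : ∃ C : ℝ, 0 < C ∧ ∀ n : ℕ, C * n ≤ (wordNorm S (g ^ n) : ℝ)) :
    ∃ f : G → ℝ,
      (∀ x : G, f x⁻¹ = -f x) ∧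
      (∀ (x : G) (n : ℕ), f (x ^ n) = n * f x) ∧
      (∃ D : ℝ, 0 ≤ D ∧ ∀ x y : G, |f x - f (x * y) + f y| ≤
        D * min (wordNorm S x : ℝ) (wordNorm S y : ℝ)) ∧
      (∃ σ : ℝ, ∀ s ∈ S, |f s| ≤ σ) ∧
      0 < f g := by
  obtain ⟨C, hC, hCg⟩ := hundist
  set ν := wordNormSeminorm hgen hsym
  have hcomm (a b : G) : ν (a * b) = ν (b * a) := by
    simp [ν, wordNorm_mul_comm hgen hnormal a b]
  obtain ⟨f, hanti, hhom, hlip, hpos⟩ :=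
    exists_antisymmetric_homogeneous_lipschitz ν hcomm hC hCg
  have hf1 : f 1 = 0 := by simpa using hhom 1 0
  refine ⟨f, hanti, hhom, ⟨2, zero_le_two, abs_sub_map_mul_add_le ν hcomm hlip hf1⟩,
    ⟨1, fun s hs => ?_⟩, hpos⟩
  have hs1 : wordNorm S s ≤ 1 := by simpa using wordNorm_le_length (l := [s]) (by simpa using hs)
  calc |f s| = |f s - f 1| := by rw [hf1, sub_zero]
    _ ≤ wordNorm S s := by simpa [ν] using hlip s 1
    _ ≤ 1 := by exact_mod_cast hs1
end

section
/- Let φ : [1,∞) → [0,∞) be an increasing function with ∫₁^∞ φ(t)/t² dt < ∞, and let a : ℕ → ℝ be a sequence satisfying |a(m+n) − a(m) − a(n)| ≤ φ(m+n) for all m, n ≥ 1. Then the limit lim_{n→∞} a(n)/n exists and is a (finite) real number. -/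
/-!
Let `T x = ∫_x^∞ φ t / t² dt`. As `φ` is increasing, `φ n / n` is at most a constant times
the integral of `φ t / t²` over an interval of length `≍ n` to the right of `n`, so when `a n`
is estimated by repeatedly splitting `n` into halves the accumulated errors telescope: a bound
`a k ≤ k A` on one block `[m, 2m)` propagates to `a n / n ≤ A + 8 T(2m)` for all `n ≥ m`.
For `m = 1`, applied to `a` and `-a`, this bounds `a n / n`. Let `l` be its liminf and pick a
large `m` with `a m / m ≈ l`. On `[m, 2m)` the two-sided hypothesis gives
`a k ≈ 4 a m - a (4m - k) ≲ 4m l - (4m - k) l = k l`, so the block lies below slope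
`l + o(1)`, hence so does the whole tail, and `limsup a n / n ≤ l`.
-/

open Filter Topology MeasureTheory Set

noncomputable def tailIntegral (φ : ℝ → ℝ) (x : ℝ) : ℝ := ∫ t in Ioi x, φ t / t ^ 2

section TailIntegral

variable {φ : ℝ → ℝ}

theorem tailIntegral_sub_tailIntegral
    (hint : IntegrableOn (fun t => φ t / t ^ 2) (Ici 1)) {x y : ℝ} (hx : 1 ≤ x)
    (hxy : x ≤ y) : tailIntegral φ x - tailIntegral φ y = ∫ t in x..y, φ t / t ^ 2 :=
  intervalIntegral.integral_Ioi_sub_Ioi (hint.mono_set fun _ ht => hx.trans ht.le) hxy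

theorem tailIntegral_nonneg (hnonneg : ∀ t, 1 ≤ t → 0 ≤ φ t) {x : ℝ} (hx : 1 ≤ x) :
    0 ≤ tailIntegral φ x :=
  setIntegral_nonneg measurableSet_Ioi fun t ht =>
    div_nonneg (hnonneg t (hx.trans (le_of_lt ht))) (sq_nonneg t)

theorem antitoneOn_tailIntegral (hnonneg : ∀ t, 1 ≤ t → 0 ≤ φ t)
    (hint : IntegrableOn (fun t => φ t / t ^ 2) (Ici 1)) :
    AntitoneOn (tailIntegral φ) (Ici 1) := by
  intro x hx y _ hxy
  have h := tailIntegral_sub_tailIntegral hint hx hxy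
  have : 0 ≤ ∫ t in x..y, φ t / t ^ 2 :=
    intervalIntegral.integral_nonneg hxy fun t ht =>
      div_nonneg (hnonneg t (le_trans hx ht.1)) (sq_nonneg t)
  linarith

theorem sub_mul_div_sq_le_tailIntegral_sub (hmono : ∀ s t, 1 ≤ s → s ≤ t → φ s ≤ φ t)
    (hnonneg : ∀ t, 1 ≤ t → 0 ≤ φ t) (hint : IntegrableOn (fun t => φ t / t ^ 2) (Ici 1))
    {x y : ℝ} (hx : 1 ≤ x) (hxy : x ≤ y) :
    (y - x) * (φ x / y ^ 2) ≤ tailIntegral φ x - tailIntegral φ y := by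
  rw [tailIntegral_sub_tailIntegral hint hx hxy, ← smul_eq_mul,
    ← intervalIntegral.integral_const]
  refine intervalIntegral.integral_mono_on hxy intervalIntegrable_const
    ((intervalIntegrable_iff_integrableOn_Icc_of_le hxy).2
      (hint.mono_set fun t ht => hx.trans ht.1)) fun t ht => ?_
  calc φ x / y ^ 2 ≤ φ t / y ^ 2 := by gcongr; exact hmono x t hx ht.1
    _ ≤ φ t / t ^ 2 := by
        have ht1 : 1 ≤ t := hx.trans ht.1
        have := hnonneg t ht1
        gcongr
        exact ht.2

theorem le_four_mul_tailIntegral (hmono : ∀ s t, 1 ≤ s → s ≤ t → φ s ≤ φ t)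
    (hnonneg : ∀ t, 1 ≤ t → 0 ≤ φ t) (hint : IntegrableOn (fun t => φ t / t ^ 2) (Ici 1))
    {x : ℝ} (hx : 1 ≤ x) : φ x ≤ 4 * x * tailIntegral φ x := by
  have hkey :=
    sub_mul_div_sq_le_tailIntegral_sub hmono hnonneg hint hx (by linarith : x ≤ 2 * x)
  have h2x := tailIntegral_nonneg hnonneg (by linarith : 1 ≤ 2 * x)
  have : (2 * x - x) * (φ x / (2 * x) ^ 2) = φ x / (4 * x) := by field_simp; ring
  rw [this, div_le_iff₀ (by linarith)] at hkey
  nlinarith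

theorem tendsto_tailIntegral_atTop (hint : IntegrableOn (fun t => φ t / t ^ 2) (Ici 1)) :
    Tendsto (tailIntegral φ) atTop (𝓝 0) := by
  have h := (tendsto_const_nhds (x := tailIntegral φ 1)).sub
    (intervalIntegral_tendsto_integral_Ioi 1 (hint.mono_set Ioi_subset_Ici_self) tendsto_id)
  rw [← tailIntegral, sub_self] at h
  refine h.congr' ?_
  filter_upwards [eventually_ge_atTop 1] with y hy
  rw [id_eq, ← tailIntegral_sub_tailIntegral hint le_rfl hy, sub_sub_cancel]

end TailIntegral

section Sequence

variable {φ : ℝ → ℝ} {a : ℕ → ℝ}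

/-- The cost `φ x` of one splitting step is absorbed by the tail integral over `[2y, 2x]`,
an interval of length at least `x / 2` on which `φ ≥ φ x`. -/
theorem le_eight_mul_tailIntegral_sub (hmono : ∀ s t, 1 ≤ s → s ≤ t → φ s ≤ φ t)
    (hnonneg : ∀ t, 1 ≤ t → 0 ≤ φ t) (hint : IntegrableOn (fun t => φ t / t ^ 2) (Ici 1))
    {x y : ℝ} (hx : 1 ≤ x) (hxy : x ≤ 2 * y) (hyx : 4 * y ≤ 3 * x) :
    φ x ≤ 8 * x * (tailIntegral φ (2 * y) - tailIntegral φ (2 * x)) := by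
  have hkey := sub_mul_div_sq_le_tailIntegral_sub hmono hnonneg hint (hx.trans hxy)
    (by linarith : 2 * y ≤ 2 * x)
  have hφ : φ x ≤ φ (2 * y) := hmono x _ hx hxy
  have hφ0 : 0 ≤ φ x := hnonneg x hx
  have : φ x / (8 * x) ≤ (2 * x - 2 * y) * (φ (2 * y) / (2 * x) ^ 2) := by
    rw [div_le_iff₀ (by linarith)]
    field_simp
    nlinarith
  rw [div_le_iff₀ (by linarith)] at this
  nlinarith

theorem le_mul_add_tailIntegral_sub_of_block
    (hmono : ∀ s t, 1 ≤ s → s ≤ t → φ s ≤ φ t)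
    (hnonneg : ∀ t, 1 ≤ t → 0 ≤ φ t) (hint : IntegrableOn (fun t => φ t / t ^ 2) (Ici 1))
    (ha : ∀ m n : ℕ, 1 ≤ m → 1 ≤ n → a (m + n) ≤ a m + a n + φ (m + n))
    {m : ℕ} (hm : 1 ≤ m) {A : ℝ} (hA : ∀ k, m ≤ k → k < 2 * m → a k ≤ k * A) :
    ∀ n, m ≤ n →
      a n ≤ n * A + 8 * n * (tailIntegral φ (2 * m) - tailIntegral φ (2 * n)) := by
  have hanti := antitoneOn_tailIntegral hnonneg hint
  intro n
  induction n using Nat.strong_induction_on with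
  | _ n ih =>
  intro hmn
  have hm' : (1 : ℝ) ≤ m := by exact_mod_cast hm
  have hmn' : (m : ℝ) ≤ n := by exact_mod_cast hmn
  have hT : tailIntegral φ (2 * n) ≤ tailIntegral φ (2 * m) :=
    hanti (by simp only [mem_Ici]; linarith) (by simp only [mem_Ici]; linarith) (by linarith)
  by_cases hn : n < 2 * m
  · nlinarith [hA n hmn hn]
  · set q := n / 2
    set p := n - q
    have hpq : (p : ℝ) + q = n := by norm_cast; omega
    have hq : (m : ℝ) ≤ q := by norm_cast; omega
    have hqp : (q : ℝ) ≤ p := by norm_cast; omega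
    have hnp : (n : ℝ) ≤ 2 * p := by norm_cast; omega
    have hpn : 4 * (p : ℝ) ≤ 3 * n := by norm_cast; omega
    have hsplit := ha p q (by omega) (by omega)
    rw [hpq, show p + q = n by omega] at hsplit
    have ihp := ih p (by omega) (by omega)
    have ihq := ih q (by omega) (by omega)
    have hTpq : tailIntegral φ (2 * p) ≤ tailIntegral φ (2 * q) :=
      hanti (by simp only [mem_Ici]; linarith) (by simp only [mem_Ici]; linarith) (by linarith)
    have hφ := le_eight_mul_tailIntegral_sub hmono hnonneg hint (by linarith) hnp hpn
    have hqT := mul_le_mul_of_nonneg_left hTpq (Nat.cast_nonneg (α := ℝ) q)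
    linear_combination hsplit + ihp + ihq + hφ + 8 * hqT +
      (A + 8 * tailIntegral φ (2 * m) - 8 * tailIntegral φ (2 * p)) * hpq

theorem div_le_add_tailIntegral_of_block (hmono : ∀ s t, 1 ≤ s → s ≤ t → φ s ≤ φ t)
    (hnonneg : ∀ t, 1 ≤ t → 0 ≤ φ t) (hint : IntegrableOn (fun t => φ t / t ^ 2) (Ici 1))
    (ha : ∀ m n : ℕ, 1 ≤ m → 1 ≤ n → a (m + n) ≤ a m + a n + φ (m + n))
    {m : ℕ} (hm : 1 ≤ m) {A : ℝ} (hA : ∀ k, m ≤ k → k < 2 * m → a k ≤ k * A)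
    {n : ℕ} (hn : m ≤ n) : a n / n ≤ A + 8 * tailIntegral φ (2 * m) := by
  have h := le_mul_add_tailIntegral_sub_of_block hmono hnonneg hint ha hm hA n hn
  have hn' : (1 : ℝ) ≤ n := by exact_mod_cast hm.trans hn
  have hT := tailIntegral_nonneg hnonneg (by linarith : 1 ≤ 2 * (n : ℝ))
  rw [div_le_iff₀ (by linarith)]
  nlinarith

end Sequence

section TwoSided

variable {φ : ℝ → ℝ} {a : ℕ → ℝ}

/-- Split `4m` as `k + (4m - k)` and as `(m + m) + (m + m)`. -/
theorem le_four_mul_sub_add (hmono : ∀ s t, 1 ≤ s → s ≤ t → φ s ≤ φ t)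
    (ha : ∀ m n : ℕ, 1 ≤ m → 1 ≤ n → |a (m + n) - a m - a n| ≤ φ (m + n))
    {m k : ℕ} (hm : 1 ≤ m) (hk : 1 ≤ k) (hkm : k < 4 * m) :
    a k ≤ 4 * a m - a (4 * m - k) + 4 * φ (4 * m) := by
  have hm' : (1 : ℝ) ≤ m := by exact_mod_cast hm
  have hsplit := neg_le_of_abs_le (ha k (4 * m - k) hk (by omega))
  have h2 := le_of_abs_le (ha m m hm hm)
  have h4 := le_of_abs_le (ha (m + m) (m + m) (by omega) (by omega))
  rw [show k + (4 * m - k) = 4 * m by omega, Nat.cast_sub hkm.le] at hsplit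
  rw [show m + m + (m + m) = 4 * m by omega] at h4
  push_cast at hsplit h4
  have hφ : φ (m + m) ≤ φ (4 * m) := hmono _ _ (by linarith) (by linarith)
  rw [show (k : ℝ) + (4 * m - k) = 4 * m by ring] at hsplit
  rw [show (m : ℝ) + m + (m + m) = 4 * m by ring] at h4
  linarith

theorem abs_div_sub_le_tailIntegral (hmono : ∀ s t, 1 ≤ s → s ≤ t → φ s ≤ φ t)
    (hnonneg : ∀ t, 1 ≤ t → 0 ≤ φ t) (hint : IntegrableOn (fun t => φ t / t ^ 2) (Ici 1))
    (ha : ∀ m n : ℕ, 1 ≤ m → 1 ≤ n → |a (m + n) - a m - a n| ≤ φ (m + n))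
    {n : ℕ} (hn : 1 ≤ n) : |a n / n - a 1| ≤ 8 * tailIntegral φ 2 := by
  have hfirst : ∀ b : ℕ → ℝ, ∀ k, 1 ≤ k → k < 2 * 1 → b k ≤ k * b 1 := by
    intro b k hk hk2
    obtain rfl : k = 1 := by omega
    simp
  have hup := div_le_add_tailIntegral_of_block hmono hnonneg hint
    (fun m n hm hn => by linarith [le_of_abs_le (ha m n hm hn)]) le_rfl (hfirst a) hn
  have hlow := div_le_add_tailIntegral_of_block hmono hnonneg hint (a := fun j => -a j)
    (fun m n hm hn => by linarith [neg_le_of_abs_le (ha m n hm hn)]) le_rfl (hfirst _) hn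
  norm_num [neg_div] at hup hlow
  rw [abs_le]
  constructor <;> linarith

theorem eventually_div_le_add_of_frequently (hmono : ∀ s t, 1 ≤ s → s ≤ t → φ s ≤ φ t)
    (hnonneg : ∀ t, 1 ≤ t → 0 ≤ φ t) (hint : IntegrableOn (fun t => φ t / t ^ 2) (Ici 1))
    (ha : ∀ m n : ℕ, 1 ≤ m → 1 ≤ n → |a (m + n) - a m - a n| ≤ φ (m + n))
    {l δ : ℝ} (hδ : 0 < δ) (hlow : ∀ᶠ n in atTop, l - δ < a n / n)
    (hfreq : ∃ᶠ n in atTop, a n / n < l + δ) : ∀ᶠ n in atTop, a n / n ≤ l + 79 * δ := by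
  obtain ⟨X, hX⟩ :=
    eventually_atTop.1 ((tendsto_tailIntegral_atTop hint).eventually (gt_mem_nhds hδ))
  obtain ⟨N, hN⟩ := eventually_atTop.1 hlow
  obtain ⟨m, ham, hm⟩ :=
    (hfreq.and_eventually (eventually_ge_atTop (max N (max 1 ⌈X⌉₊)))).exists
  simp only [sup_le_iff, Nat.ceil_le] at hm
  obtain ⟨hNm, hm1, hXm⟩ := hm
  have hm' : (1 : ℝ) ≤ m := by exact_mod_cast hm1
  rw [div_lt_iff₀ (by linarith)] at ham
  have hφ : φ (4 * m) ≤ 16 * m * δ := by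
    have := le_four_mul_tailIntegral hmono hnonneg hint (by linarith : (1 : ℝ) ≤ 4 * m)
    nlinarith [hX (4 * m) (by linarith)]
  have hblock : ∀ k, m ≤ k → k < 2 * m → a k ≤ k * (l + 71 * δ) := by
    intro k hmk hk
    have hk' : (m : ℝ) ≤ k := by exact_mod_cast hmk
    have hj := hN (4 * m - k) (by omega)
    rw [lt_div_iff₀ (by norm_cast; omega), Nat.cast_sub (by omega)] at hj
    push_cast at hj
    have := le_four_mul_sub_add hmono ha hm1 (k := k) (by omega) (by omega)
    nlinarith
  filter_upwards [eventually_ge_atTop m] with n hn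
  have := div_le_add_tailIntegral_of_block hmono hnonneg hint
    (fun m n hm hn => by linarith [le_of_abs_le (ha m n hm hn)]) hm1 hblock hn
  linarith [hX (2 * m) (by linarith)]

end TwoSided

/-- De Bruijn–Erdős generalisation of Fekete's lemma (two-sided version): if
`φ` is increasing on `[1,∞)`, nonnegative there, with `∫₁^∞ φ(t)/t² dt < ∞`, and
`|a(m+n) − a(m) − a(n)| ≤ φ(m+n)` for all `m, n ≥ 1`, then `a(n)/n` converges to a
finite real limit. -/
theorem deBruijnErdos_two_sided (φ : ℝ → ℝ)
    (hmono : ∀ s t : ℝ, 1 ≤ s → s ≤ t → φ s ≤ φ t)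
    (hnonneg : ∀ t : ℝ, 1 ≤ t → 0 ≤ φ t)
    (hint : MeasureTheory.IntegrableOn (fun t : ℝ => φ t / t ^ 2) (Set.Ici (1 : ℝ)))
    (a : ℕ → ℝ)
    (ha : ∀ m n : ℕ, 1 ≤ m → 1 ≤ n → |a (m + n) - a m - a n| ≤ φ ((m : ℝ) + (n : ℝ))) :
    ∃ L : ℝ, Tendsto (fun n : ℕ => a n / n) atTop (𝓝 L) := by
  have hbdd : ∀ᶠ n in atTop, |a n / n - a 1| ≤ 8 * tailIntegral φ 2 :=
    eventually_atTop.2 ⟨1, fun n hn => abs_div_sub_le_tailIntegral hmono hnonneg hint ha hn⟩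
  have hbdd_le : IsBoundedUnder (· ≤ ·) atTop fun n : ℕ => a n / n :=
    isBoundedUnder_of_eventually_le (a := a 1 + 8 * tailIntegral φ 2)
      (hbdd.mono fun n hn => by linarith [le_of_abs_le hn])
  have hbdd_ge : IsBoundedUnder (· ≥ ·) atTop fun n : ℕ => a n / n :=
    isBoundedUnder_of_eventually_ge (a := a 1 - 8 * tailIntegral φ 2)
      (hbdd.mono fun n hn => by linarith [neg_le_of_abs_le hn])
  set l := liminf (fun n : ℕ => a n / n) atTop
  have hlimsup : limsup (fun n : ℕ => a n / n) atTop ≤ l := by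
    refine le_of_forall_pos_le_add fun ε hε => limsup_le_of_le hbdd_ge.isCoboundedUnder_le ?_
    have hδ : 0 < ε / 79 := by positivity
    have := eventually_div_le_add_of_frequently hmono hnonneg hint ha (l := l) hδ
      (eventually_lt_of_lt_liminf (by linarith) hbdd_ge)
      (frequently_lt_of_liminf_lt hbdd_le.isCoboundedUnder_ge (by linarith))
    rwa [mul_div_cancel₀ ε (by norm_num)] at this
  exact ⟨l, tendsto_of_liminf_eq_limsup rfl
    (le_antisymm hlimsup (liminf_le_limsup hbdd_le hbdd_ge)) hbdd_le hbdd_ge⟩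
end

section
/- Let G be a group equipped with a norm ν, let φ : [1,∞) → [0,∞) be an increasing function with ∫₁^∞ φ(t)/t² dt < ∞, and let f : G → ℝ satisfy |f(g) − f(gh) + f(h)| ≤ φ(ν(g) + ν(h)) for all g,h ∈ G. Then for every g ∈ G the limit lim_{n→∞} f(gⁿ)/n exists and is a (finite) real number; i.e., f admits a homogenisation. -/
/-!
For fixed `g`, the sequence `a n = f (gⁿ)` is almost additive:
`|a (n + m) - a n - a m| ≤ φ ((n + m) C)` with `C = max (ν g) 1`, by subadditivity of `ν` and
monotonicity of `φ`.
Comparing `φ(2ᵏ⁺¹u)/2ᵏ⁺¹` with `u ∫ φ(t)/t²` over `[2ᵏ⁺¹u, 2ᵏ⁺²u]` shows that the defects along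
the doubling sequence `n, 2n, 4n, …` sum to at most `4u ∫_{2u}^∞ φ(t)/t² dt` with `u = nC`.
Hence `M n = lim_k a (2ᵏ n) / 2ᵏ` exists and is additive, so `M n = n M 1`, and
`|M n - a n| = o(n)` because the tail of a convergent integral tends to zero.
Therefore `a n / n → M 1`.
-/

open Filter Topology MeasureTheory Set

lemma monotone_of_monotoneOn_Ici {φ : ℝ → ℝ} {c : ℝ} (hmono : MonotoneOn φ (Ici c))
    (hconst : ∀ t ≤ c, φ t = φ c) : Monotone φ := by
  intro s t hst
  rcases le_total s c with hs | hs
  · rw [hconst s hs]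
    rcases le_total t c with ht | ht
    · rw [hconst t ht]
    · exact hmono self_mem_Ici ht ht
  · exact hmono hs (hs.trans hst) hst

lemma tendsto_setIntegral_Ici_atTop {f : ℝ → ℝ} {a : ℝ} (hf : IntegrableOn f (Ici a)) :
    Tendsto (fun x => ∫ t in Ici x, f t) atTop (𝓝 0) := by
  have h := tendsto_setIntegral_of_antitone (μ := volume) (f := f) (fun x => measurableSet_Ici)
    (fun x y hxy => Ici_subset_Ici.2 hxy) ⟨a, hf⟩
  have hempty : (⋂ x : ℝ, Ici x) = ∅ :=
    eq_empty_of_forall_notMem fun t ht => (lt_add_one t).not_ge (mem_iInter.1 ht (t + 1))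
  rwa [hempty, setIntegral_empty] at h

section DyadicSums

variable {φ : ℝ → ℝ}

lemma div_le_four_mul_integral (hφ : Monotone φ) (hφ0 : ∀ t, 0 ≤ φ t)
    (hint : IntegrableOn (fun t => φ t / t ^ 2) (Ici 1)) {t : ℝ} (ht : 1 ≤ t) :
    φ t / t ≤ 4 * ∫ s in t..2 * t, φ s / s ^ 2 := by
  have ht0 : 0 < t := one_pos.trans_le ht
  have hlow : ∀ s ∈ Icc t (2 * t), φ t / (2 * t) ^ 2 ≤ φ s / s ^ 2 := fun s hs =>
    div_le_div₀ (hφ0 s) (hφ hs.1) (pow_pos (ht0.trans_le hs.1) 2)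
      (pow_le_pow_left₀ (ht0.le.trans hs.1) hs.2 2)
  have hint' : IntervalIntegrable (fun s => φ s / s ^ 2) volume t (2 * t) :=
    (intervalIntegrable_iff_integrableOn_Icc_of_le (by linarith)).2
      (hint.mono_set fun s hs => ht.trans hs.1)
  calc φ t / t = 4 * ((2 * t - t) • (φ t / (2 * t) ^ 2)) := by
        rw [smul_eq_mul]; field_simp; ring
    _ ≤ 4 * ∫ s in t..2 * t, φ s / s ^ 2 := by
        rw [← intervalIntegral.integral_const]
        gcongr
        exact intervalIntegral.integral_mono_on (by linarith) intervalIntegrable_const hint' hlow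

lemma sum_div_two_pow_le (hφ : Monotone φ) (hφ0 : ∀ t, 0 ≤ φ t)
    (hint : IntegrableOn (fun t => φ t / t ^ 2) (Ici 1)) {u : ℝ} (hu : 1 ≤ u) (K : ℕ) :
    ∑ k ∈ Finset.range K, φ (2 ^ (k + 1) * u) / 2 ^ (k + 1) ≤
      4 * u * ∫ t in Ici (2 * u), φ t / t ^ 2 := by
  set x : ℕ → ℝ := fun k => 2 ^ (k + 1) * u with hx
  have hx1 : ∀ k, 1 ≤ x k := fun k => one_le_mul_of_one_le_of_one_le (one_le_pow₀ one_le_two) hu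
  have hint_Ici : ∀ s, 1 ≤ s → IntegrableOn (fun t => φ t / t ^ 2) (Ici s) := fun s hs =>
    hint.mono_set (Ici_subset_Ici.2 hs)
  have hxx : ∀ k, 2 * x k = x (k + 1) := fun k => by simp only [hx]; ring
  have hterm : ∀ k, φ (x k) / 2 ^ (k + 1) ≤ 4 * u * ∫ t in x k..x (k + 1), φ t / t ^ 2 := by
    intro k
    calc φ (x k) / 2 ^ (k + 1) = u * (φ (x k) / x k) := by
          simp only [hx]; field_simp
      _ ≤ 4 * u * ∫ t in x k..x (k + 1), φ t / t ^ 2 := by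
          rw [← hxx, mul_assoc, mul_left_comm]
          exact mul_le_mul_of_nonneg_left (div_le_four_mul_integral hφ hφ0 hint (hx1 k))
            (zero_le_one.trans hu)
  have hnonneg : 0 ≤ᵐ[volume.restrict (Ici (2 * u))] fun t => φ t / t ^ 2 :=
    ae_of_all _ fun t => div_nonneg (hφ0 t) (sq_nonneg t)
  calc ∑ k ∈ Finset.range K, φ (x k) / 2 ^ (k + 1)
      ≤ ∑ k ∈ Finset.range K, 4 * u * ∫ t in x k..x (k + 1), φ t / t ^ 2 :=
        Finset.sum_le_sum fun k _ => hterm k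
    _ = 4 * u * ∫ t in x 0..x K, φ t / t ^ 2 := by
        rw [← Finset.mul_sum, intervalIntegral.sum_integral_adjacent_intervals fun k _ =>
          (intervalIntegrable_iff_integrableOn_Ioc_of_le (by rw [← hxx]; linarith [hx1 k])).2
            ((hint_Ici _ (hx1 k)).mono_set (Ioc_subset_Ioi_self.trans Ioi_subset_Ici_self))]
    _ ≤ 4 * u * ∫ t in Ici (2 * u), φ t / t ^ 2 := by
        have hx0 : x 0 = 2 * u := by simp [hx]
        have hx0K : x 0 ≤ x K := by simp only [hx]; gcongr <;> simp
        gcongr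
        rw [intervalIntegral.integral_of_le hx0K, hx0]
        exact setIntegral_mono_set (hint_Ici _ (by linarith)) hnonneg
          (Ioc_subset_Ioi_self.trans Ioi_subset_Ici_self).eventuallyLE

end DyadicSums

noncomputable def doublingLimit (a : ℕ → ℝ) (n : ℕ) : ℝ :=
  limUnder atTop fun k : ℕ => a (2 ^ k * n) / 2 ^ k

section AlmostAdditive

variable {a ψ ε : ℕ → ℝ} (hψ : ∀ n, 0 ≤ ψ n)
  (hsum : ∀ n, 1 ≤ n → ∀ K, ∑ k ∈ Finset.range K, ψ (2 ^ (k + 1) * n) / 2 ^ (k + 1) ≤ n * ε n)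
  (hkey : ∀ n m, 1 ≤ n → 1 ≤ m → |a (n + m) - a n - a m| ≤ ψ (n + m))

include hkey in
lemma abs_sub_sub_div_two_pow_le {n m : ℕ} (hn : 1 ≤ n) (hm : 1 ≤ m) (k : ℕ) :
    |a (2 ^ k * (n + m)) / 2 ^ k - a (2 ^ k * n) / 2 ^ k - a (2 ^ k * m) / 2 ^ k| ≤
      ψ (2 ^ k * (n + m)) / 2 ^ k := by
  have h := hkey (2 ^ k * n) (2 ^ k * m) (Nat.mul_pos (by positivity) hn)
    (Nat.mul_pos (by positivity) hm)
  rw [← mul_add] at h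
  rw [← sub_div, ← sub_div, abs_div, abs_of_pos (pow_pos two_pos k : (0 : ℝ) < 2 ^ k)]
  exact div_le_div_of_nonneg_right h (by positivity)

include hkey in
lemma dist_div_two_pow_le {n : ℕ} (hn : 1 ≤ n) (k : ℕ) :
    dist (a (2 ^ k * n) / 2 ^ k) (a (2 ^ (k + 1) * n) / 2 ^ (k + 1)) ≤
      ψ (2 ^ (k + 1) * n) / 2 ^ (k + 1) := by
  have h := hkey (2 ^ k * n) (2 ^ k * n) (Nat.mul_pos (by positivity) hn)
    (Nat.mul_pos (by positivity) hn)
  rw [← two_mul, ← mul_assoc, ← pow_succ'] at h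
  have hrw : a (2 ^ k * n) / 2 ^ k - a (2 ^ (k + 1) * n) / 2 ^ (k + 1) =
      -(a (2 ^ (k + 1) * n) - a (2 ^ k * n) - a (2 ^ k * n)) / 2 ^ (k + 1) := by
    rw [pow_succ]; field_simp; ring
  rw [Real.dist_eq, hrw, abs_div, abs_neg, abs_of_pos (pow_pos two_pos (k + 1) : (0 : ℝ) < _)]
  exact div_le_div_of_nonneg_right h (by positivity)

include hψ hsum in
lemma summable_div_two_pow {n : ℕ} (hn : 1 ≤ n) :
    Summable fun k => ψ (2 ^ (k + 1) * n) / 2 ^ (k + 1) :=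
  summable_of_sum_range_le (fun _ => div_nonneg (hψ _) (by positivity)) (hsum n hn)

include hψ hsum hkey in
lemma tendsto_doublingLimit {n : ℕ} (hn : 1 ≤ n) :
    Tendsto (fun k : ℕ => a (2 ^ k * n) / 2 ^ k) atTop (𝓝 (doublingLimit a n)) :=
  (cauchySeq_of_summable_dist ((summable_div_two_pow hψ hsum hn).of_nonneg_of_le
    (fun _ => dist_nonneg) (dist_div_two_pow_le hkey hn))).tendsto_limUnder

include hψ hsum hkey in
lemma abs_doublingLimit_sub_le {n : ℕ} (hn : 1 ≤ n) :
    |doublingLimit a n - a n| ≤ n * ε n := by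
  have h := dist_le_tsum_of_dist_le_of_tendsto₀ _ (dist_div_two_pow_le hkey hn)
    (summable_div_two_pow hψ hsum hn) (tendsto_doublingLimit hψ hsum hkey hn)
  simp only [pow_zero, one_mul, div_one] at h
  rw [dist_comm, Real.dist_eq] at h
  exact h.trans (Real.tsum_le_of_sum_range_le (fun _ => div_nonneg (hψ _) (by positivity))
    (hsum n hn))

include hψ hsum hkey in
lemma doublingLimit_add {n m : ℕ} (hn : 1 ≤ n) (hm : 1 ≤ m) :
    doublingLimit a (n + m) = doublingLimit a n + doublingLimit a m := by
  have hnm : 1 ≤ n + m := le_add_right hn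
  have hlim := ((tendsto_doublingLimit hψ hsum hkey hnm).sub
    (tendsto_doublingLimit hψ hsum hkey hn)).sub (tendsto_doublingLimit hψ hsum hkey hm)
  have hψ_lim : Tendsto (fun k : ℕ => ψ (2 ^ k * (n + m)) / 2 ^ k) atTop (𝓝 0) :=
    (tendsto_add_atTop_iff_nat 1).1 (summable_div_two_pow hψ hsum hnm).tendsto_atTop_zero
  have hzero := squeeze_zero_norm (fun k => (Real.norm_eq_abs _).trans_le
    (abs_sub_sub_div_two_pow_le hkey hn hm k)) hψ_lim
  linarith [tendsto_nhds_unique hlim hzero]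

include hψ hsum hkey in
lemma doublingLimit_eq_mul {n : ℕ} (hn : 1 ≤ n) : doublingLimit a n = n * doublingLimit a 1 := by
  induction n, hn using Nat.le_induction with
  | base => simp
  | succ n hn ih =>
    rw [doublingLimit_add hψ hsum hkey hn le_rfl, ih]
    push_cast
    ring

include hψ hsum hkey in
theorem exists_tendsto_div_of_abs_sub_sub_le (hε : Tendsto ε atTop (𝓝 0)) :
    ∃ L, Tendsto (fun n : ℕ => a n / n) atTop (𝓝 L) := by
  refine ⟨doublingLimit a 1, (tendsto_iff_dist_tendsto_zero.2 ?_)⟩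
  refine squeeze_zero' (Eventually.of_forall fun _ => dist_nonneg) ?_ hε
  filter_upwards [eventually_ge_atTop 1] with n hn
  have hn0 : (0 : ℝ) < n := by exact_mod_cast hn
  have h := abs_doublingLimit_sub_le hψ hsum hkey hn
  rw [doublingLimit_eq_mul hψ hsum hkey hn, abs_sub_comm] at h
  have hrw : a n / n - doublingLimit a 1 = (a n - n * doublingLimit a 1) / n := by field_simp
  rw [Real.dist_eq, hrw, abs_div, abs_of_pos hn0, div_le_iff₀ hn0]
  linarith

end AlmostAdditive

lemma apply_pow_le_mul {G : Type*} [Monoid G] {ν : G → ℝ}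
    (hν : ∀ g h, ν (g * h) ≤ ν g + ν h) (g : G) {n : ℕ} (hn : 1 ≤ n) :
    ν (g ^ n) ≤ n * ν g := by
  induction n, hn using Nat.le_induction with
  | base => simp
  | succ n hn ih =>
    rw [pow_succ]
    push_cast
    linarith [hν (g ^ n) g]

theorem homogenisation_exists_general {G : Type*} [Group G] (ν : G → ℝ)
    (hν_mul : ∀ g h : G, ν (g * h) ≤ ν g + ν h)
    (φ : ℝ → ℝ)
    (hmono : ∀ s t : ℝ, 1 ≤ s → s ≤ t → φ s ≤ φ t)
    (hext : ∀ t : ℝ, t ≤ 1 → φ t = φ 1)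
    (hnonneg : ∀ t : ℝ, 0 ≤ φ t)
    (hint : MeasureTheory.IntegrableOn (fun t : ℝ => φ t / t ^ 2) (Set.Ici (1 : ℝ)))
    (f : G → ℝ)
    (hf : ∀ g h : G, |f g - f (g * h) + f h| ≤ φ (ν g + ν h)) :
    ∀ g : G, ∃ L : ℝ, Tendsto (fun n : ℕ => f (g ^ n) / n) atTop (𝓝 L) := by
  intro g
  have hφ : Monotone φ := monotone_of_monotoneOn_Ici (fun s hs t _ hst => hmono s t hs hst) hext
  set C := max (ν g) 1
  have hC : 1 ≤ C := le_max_right _ _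
  refine exists_tendsto_div_of_abs_sub_sub_le (ψ := fun n => φ (n * C))
    (ε := fun n => 4 * C * ∫ t in Ici (2 * (n * C)), φ t / t ^ 2) (fun n => hnonneg _) ?_ ?_ ?_
  · intro n hn K
    have hu : 1 ≤ (n : ℝ) * C := one_le_mul_of_one_le_of_one_le (by exact_mod_cast hn) hC
    convert sum_div_two_pow_le hφ hnonneg hint hu K using 1
    · push_cast
      simp only [mul_assoc]
    · ring
  · intro n m hn hm
    have hνC : ∀ {k : ℕ}, 1 ≤ k → ν (g ^ k) ≤ k * C := fun hk =>
      (apply_pow_le_mul hν_mul g hk).trans (by gcongr; exact le_max_left _ _)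
    calc |f (g ^ (n + m)) - f (g ^ n) - f (g ^ m)|
        = |f (g ^ n) - f (g ^ n * g ^ m) + f (g ^ m)| := by
          rw [← pow_add, ← abs_neg]; congr 1; ring
      _ ≤ φ (ν (g ^ n) + ν (g ^ m)) := hf _ _
      _ ≤ φ ((n + m : ℕ) * C) := hφ (by push_cast; linarith [hνC hn, hνC hm])
  · have h2nC : Tendsto (fun n : ℕ => 2 * (n * C)) atTop atTop :=
      (tendsto_natCast_atTop_atTop.atTop_mul_const (zero_lt_one.trans_le hC)).const_mul_atTop
        two_pos
    simpa using ((tendsto_setIntegral_Ici_atTop hint).comp h2nC).const_mul (4 * C)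

/-- If `G` carries a norm `ν`, `φ` is increasing on `[1,∞)` (extended by `φ(t) = φ(1)` for
`t ≤ 1`), nonnegative, with `∫₁^∞ φ(t)/t² dt < ∞`, and
`|f(g) − f(gh) + f(h)| ≤ φ(ν(g) + ν(h))` for all `g, h`, then for every `g` the limit
`lim_{n→∞} f(gⁿ)/n` exists; i.e. `f` admits a homogenisation. -/
theorem homogenisation_exists {G : Type*} [Group G] (ν : G → ℝ)
    (hν_nonneg : ∀ g : G, 0 ≤ ν g)
    (hν_zero : ∀ g : G, ν g = 0 ↔ g = 1)
    (hν_inv : ∀ g : G, ν g⁻¹ = ν g)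
    (hν_mul : ∀ g h : G, ν (g * h) ≤ ν g + ν h)
    (φ : ℝ → ℝ)
    (hmono : ∀ s t : ℝ, 1 ≤ s → s ≤ t → φ s ≤ φ t)
    (hext : ∀ t : ℝ, t ≤ 1 → φ t = φ 1)
    (hnonneg : ∀ t : ℝ, 0 ≤ φ t)
    (hint : MeasureTheory.IntegrableOn (fun t : ℝ => φ t / t ^ 2) (Set.Ici (1 : ℝ)))
    (f : G → ℝ)
    (hf : ∀ g h : G, |f g - f (g * h) + f h| ≤ φ (ν g + ν h)) :
    ∀ g : G, ∃ L : ℝ, Tendsto (fun n : ℕ => f (g ^ n) / n) atTop (𝓝 L) :=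
  homogenisation_exists_general ν hν_mul φ hmono hext hnonneg hint f hf
end

section
/- Let G be a group, g, h ∈ G, and n ≥ 1 an integer. Then there exist elements c₁, …, c_{n−1} ∈ G, each of which is a conjugate of a commutator of the form [g, x] = g⁻¹x⁻¹gx for some x ∈ G, such that gⁿhⁿ = (gh)ⁿ · c₁ ⋯ c_{n−1}. Symmetrically, there also exist such elements which are conjugates of commutators of the form [h, x]. -/
private lemma conj_list_prod {G : Type*} [Group G] (a : G) :
    ∀ l : List G, (l.map (fun c => a⁻¹ * c * a)).prod = a⁻¹ * l.prod * a
  | [] => by simp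
  | c :: l => by
    simp only [List.map_cons, List.prod_cons, conj_list_prod a l]
    group

private lemma aux_g {G : Type*} [Group G] (g h : G) :
    ∀ n : ℕ, ∃ l : List G, l.length = n ∧
      (∀ c ∈ l, ∃ x y : G, c = y⁻¹ * (g⁻¹ * x⁻¹ * g * x) * y) ∧
      g ^ (n + 1) * h ^ (n + 1) = (g * h) ^ (n + 1) * l.prod
  | 0 => ⟨[], rfl, by simp, by simp⟩
  | n + 1 => by
    obtain ⟨l, hlen, hmem, heq⟩ := aux_g g h n
    set A := (g * h) ^ (n + 1) with hA
    refine ⟨(h⁻¹ * (g⁻¹ * A⁻¹ * g * A) * h) :: l.map (fun c => h⁻¹ * c * h), by simp [hlen],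
      ?_, ?_⟩
    · intro c hc
      rcases List.mem_cons.mp hc with rfl | hc
      · exact ⟨A, h, rfl⟩
      · simp only [List.mem_map] at hc
        obtain ⟨d, hd, rfl⟩ := hc
        obtain ⟨x, y, rfl⟩ := hmem d hd
        exact ⟨x, y * h, by group⟩
    · have h1 : g ^ (n + 2) * h ^ (n + 2) = g * (g ^ (n + 1) * h ^ (n + 1)) * h := by
        rw [pow_succ g (n + 1), pow_succ h (n + 1)]
        group
      rw [h1, heq, List.prod_cons, conj_list_prod]
      have h2 : (g * h) ^ (n + 1 + 1) = A * (g * h) := by rw [hA, pow_succ]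
      rw [h2]
      group

private lemma aux_h {G : Type*} [Group G] (g h : G) :
    ∀ n : ℕ, ∃ l : List G, l.length = n ∧
      (∀ c ∈ l, ∃ x y : G, c = y⁻¹ * (h⁻¹ * x⁻¹ * h * x) * y) ∧
      g ^ (n + 1) * h ^ (n + 1) = (g * h) ^ (n + 1) * l.prod
  | 0 => ⟨[], rfl, by simp, by simp⟩
  | n + 1 => by
    obtain ⟨l, hlen, hmem, heq⟩ := aux_h g h n
    set A := (g * h) ^ (n + 1) with hA
    refine ⟨(A⁻¹ * h⁻¹ * A * h) :: l.map (fun c => h⁻¹ * c * h), by simp [hlen], ?_, ?_⟩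
    · intro c hc
      rcases List.mem_cons.mp hc with rfl | hc
      · exact ⟨A⁻¹, A, by group⟩
      · simp only [List.mem_map] at hc
        obtain ⟨d, hd, rfl⟩ := hc
        obtain ⟨x, y, rfl⟩ := hmem d hd
        exact ⟨x, y * h, by group⟩
    · have h1 : g ^ (n + 2) * h ^ (n + 2) = g * (g ^ (n + 1) * h ^ (n + 1)) * h := by
        rw [pow_succ g (n + 1), pow_succ h (n + 1)]
        group
      rw [h1, heq, List.prod_cons, conj_list_prod]
      have h2 : (g * h) ^ (n + 1 + 1) = g * h * A := by rw [hA, ← pow_succ']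
      rw [h2]
      group

/-- For all `g, h` in a group and `n ≥ 1` one has `gⁿhⁿ = (gh)ⁿ·c₁⋯c_{n−1}` where the
`cᵢ` are conjugates of commutators `[g, x] = g⁻¹x⁻¹gx`; symmetrically, one may also choose
the `cᵢ` to be conjugates of commutators `[h, x]`. -/
theorem pow_mul_pow_eq_mul_pow_mul_conjugate_commutators
    {G : Type*} [Group G] (g h : G) (n : ℕ) (hn : 1 ≤ n) :
    (∃ l : List G, l.length = n - 1 ∧
      (∀ c ∈ l, ∃ x y : G, c = y⁻¹ * (g⁻¹ * x⁻¹ * g * x) * y) ∧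
      g ^ n * h ^ n = (g * h) ^ n * l.prod) ∧
    (∃ l : List G, l.length = n - 1 ∧
      (∀ c ∈ l, ∃ x y : G, c = y⁻¹ * (h⁻¹ * x⁻¹ * h * x) * y) ∧
      g ^ n * h ^ n = (g * h) ^ n * l.prod) := by
  obtain ⟨m, rfl⟩ := Nat.exists_eq_add_of_le hn
  simp only [Nat.add_sub_cancel_left, add_comm 1 m] at *
  exact ⟨aux_g g h m, aux_h g h m⟩
end

section
/- Let G be a group equipped with a conjugation-invariant norm ν. Then for all g, h ∈ G and every integer n ≥ 1, ν((gh)^{−n} · gⁿhⁿ) ≤ 2(n−1)·min{ν(g), ν(h)}. -/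
/-- For a conjugation-invariant norm `ν` on a group `G`, all `g, h ∈ G`, and `n ≥ 1`,
`ν((gh)⁻ⁿ · gⁿhⁿ) ≤ 2(n − 1)·min{ν(g), ν(h)}`. -/
theorem norm_conj_commutator_bound {G : Type*} [Group G] (ν : G → ℝ)
    (hν_nonneg : ∀ g : G, 0 ≤ ν g)
    (hν_zero : ∀ g : G, ν g = 0 ↔ g = 1)
    (hν_inv : ∀ g : G, ν g⁻¹ = ν g)
    (hν_mul : ∀ g h : G, ν (g * h) ≤ ν g + ν h)
    (hν_conj : ∀ g h : G, ν (h⁻¹ * g * h) = ν g) :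
    ∀ (g h : G) (n : ℕ), 1 ≤ n →
      ν (((g * h) ^ n)⁻¹ * (g ^ n * h ^ n)) ≤ 2 * ((n : ℝ) - 1) * min (ν g) (ν h) := by
  intro g h n hn
  have h1 : ν (1 : G) = 0 := (hν_zero 1).mpr rfl
  -- bound by ν a
  have keyA : ∀ (a b : G) (n : ℕ), 1 ≤ n →
      ν (((a * b) ^ n)⁻¹ * (a ^ n * b ^ n)) ≤ 2 * ((n : ℝ) - 1) * ν a := by
    intro a b n hn
    induction n, hn using Nat.le_induction with
    | base =>
      have e : (((a * b) ^ 1)⁻¹ * (a ^ 1 * b ^ 1) : G) = 1 := by group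
      rw [e, h1]; norm_num
    | succ n hn ih =>
      have eq1 : (((a * b) ^ (n + 1))⁻¹ * (a ^ (n + 1) * b ^ (n + 1)) : G)
          = ((a * b)⁻¹ * (((a * b) ^ n)⁻¹ * (a ^ n * b ^ n)) * (a * b))
            * (b⁻¹ * (a⁻¹ * ((b ^ n)⁻¹ * a * b ^ n)) * b) := by
        rw [pow_succ (a * b) n, mul_inv_rev]; group
      have step1 : ν (((a * b) ^ (n + 1))⁻¹ * (a ^ (n + 1) * b ^ (n + 1)))
          ≤ ν ((a * b)⁻¹ * (((a * b) ^ n)⁻¹ * (a ^ n * b ^ n)) * (a * b))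
            + ν (b⁻¹ * (a⁻¹ * ((b ^ n)⁻¹ * a * b ^ n)) * b) := by
        rw [eq1]; exact hν_mul _ _
      rw [hν_conj, hν_conj] at step1
      have step2 : ν (a⁻¹ * ((b ^ n)⁻¹ * a * b ^ n)) ≤ ν a + ν a := by
        calc ν (a⁻¹ * ((b ^ n)⁻¹ * a * b ^ n))
            ≤ ν a⁻¹ + ν ((b ^ n)⁻¹ * a * b ^ n) := hν_mul _ _
          _ = ν a + ν a := by rw [hν_inv, hν_conj]
      have : ν (((a * b) ^ (n + 1))⁻¹ * (a ^ (n + 1) * b ^ (n + 1)))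
          ≤ 2 * ((n : ℝ) - 1) * ν a + (ν a + ν a) :=
        le_trans step1 (add_le_add ih step2)
      calc ν (((a * b) ^ (n + 1))⁻¹ * (a ^ (n + 1) * b ^ (n + 1)))
          ≤ 2 * ((n : ℝ) - 1) * ν a + (ν a + ν a) := this
        _ = 2 * (((n : ℕ) + 1 : ℝ) - 1) * ν a := by ring
        _ = 2 * (((n + 1 : ℕ) : ℝ) - 1) * ν a := by push_cast; ring
  -- bound by ν b
  have keyB : ∀ (a b : G) (n : ℕ), 1 ≤ n →
      ν (((a * b) ^ n)⁻¹ * (a ^ n * b ^ n)) ≤ 2 * ((n : ℝ) - 1) * ν b := by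
    intro a b n hn
    induction n, hn using Nat.le_induction with
    | base =>
      have e : (((a * b) ^ 1)⁻¹ * (a ^ 1 * b ^ 1) : G) = 1 := by group
      rw [e, h1]; norm_num
    | succ n hn ih =>
      have eq1 : (((a * b) ^ (n + 1))⁻¹ * (a ^ (n + 1) * b ^ (n + 1)) : G)
          = (((a * b) ^ n)⁻¹ * (a ^ n * b ^ n))
            * ((b ^ n)⁻¹ * (((a ^ n)⁻¹ * b⁻¹ * a ^ n) * b) * b ^ n) := by
        rw [pow_succ' (a * b) n, mul_inv_rev]; group
      have step1 : ν (((a * b) ^ (n + 1))⁻¹ * (a ^ (n + 1) * b ^ (n + 1)))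
          ≤ ν (((a * b) ^ n)⁻¹ * (a ^ n * b ^ n))
            + ν ((b ^ n)⁻¹ * (((a ^ n)⁻¹ * b⁻¹ * a ^ n) * b) * b ^ n) := by
        rw [eq1]; exact hν_mul _ _
      rw [hν_conj] at step1
      have step2 : ν (((a ^ n)⁻¹ * b⁻¹ * a ^ n) * b) ≤ ν b + ν b := by
        calc ν (((a ^ n)⁻¹ * b⁻¹ * a ^ n) * b)
            ≤ ν ((a ^ n)⁻¹ * b⁻¹ * a ^ n) + ν b := hν_mul _ _
          _ = ν b + ν b := by rw [hν_conj, hν_inv]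
      have : ν (((a * b) ^ (n + 1))⁻¹ * (a ^ (n + 1) * b ^ (n + 1)))
          ≤ 2 * ((n : ℝ) - 1) * ν b + (ν b + ν b) :=
        le_trans step1 (add_le_add ih step2)
      calc ν (((a * b) ^ (n + 1))⁻¹ * (a ^ (n + 1) * b ^ (n + 1)))
          ≤ 2 * ((n : ℝ) - 1) * ν b + (ν b + ν b) := this
        _ = 2 * (((n + 1 : ℕ) : ℝ) - 1) * ν b := by push_cast; ring
  rcases min_cases (ν g) (ν h) with ⟨hmin, _⟩ | ⟨hmin, _⟩
  · rw [hmin]; exact keyA g h n hn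
  · rw [hmin]; exact keyB g h n hn
end

section
/- Let G be a group equipped with a conjugation-invariant norm ν. Then for every g ∈ G the limit τ(g) := lim_{n→∞} ν(gⁿ)/n exists (the translation length), and τ is a homogeneous partial quasimorphism: τ(g^k) = k·τ(g) for all k ∈ ℕ, and |τ(g) − τ(gh) + τ(h)| ≤ 4·min{ν(g), ν(h)} for all g, h ∈ G. -/
open Filter Topology

/-- For a conjugation-invariant norm `ν` on a group `G`, the translation length
`τ(g) = lim_{n→∞} ν(gⁿ)/n` exists for every `g`, and `τ` is a homogeneous partial
quasimorphism relative to `ν` with defect `4`. -/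
theorem translation_length_homogeneous_pqm {G : Type*} [Group G] (ν : G → ℝ)
    (hν_nonneg : ∀ g : G, 0 ≤ ν g)
    (hν_zero : ∀ g : G, ν g = 0 ↔ g = 1)
    (hν_inv : ∀ g : G, ν g⁻¹ = ν g)
    (hν_mul : ∀ g h : G, ν (g * h) ≤ ν g + ν h)
    (hν_conj : ∀ g h : G, ν (h⁻¹ * g * h) = ν g) :
    ∃ τ : G → ℝ,
      (∀ g : G, Tendsto (fun n : ℕ => ν (g ^ n) / n) atTop (𝓝 (τ g))) ∧
      (∀ (g : G) (k : ℕ), τ (g ^ k) = k * τ g) ∧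
      (∀ g h : G, |τ g - τ (g * h) + τ h| ≤ 4 * min (ν g) (ν h)) := by
  have hν1 : ν 1 = 0 := (hν_zero 1).mpr rfl
  have hsub : ∀ g : G, Subadditive (fun n => ν (g ^ n)) := by
    intro g m n
    simpa [pow_add] using hν_mul (g ^ m) (g ^ n)
  have hbdd : ∀ g : G, BddBelow (Set.range fun n : ℕ => ν (g ^ n) / n) := by
    intro g
    refine ⟨0, ?_⟩
    rintro x ⟨n, rfl⟩
    exact div_nonneg (hν_nonneg _) (Nat.cast_nonneg n)
  set τ : G → ℝ := fun g => (hsub g).lim with hτdef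
  have hlim : ∀ g : G, Tendsto (fun n : ℕ => ν (g ^ n) / n) atTop (𝓝 (τ g)) :=
    fun g => (hsub g).tendsto_lim (hbdd g)
  -- basic facts
  have hconjν : ∀ a b : G, ν (a * b * a⁻¹) = ν b := by
    intro a b
    simpa using hν_conj b a⁻¹
  have hpow : ∀ (g : G) (n : ℕ), ν (g ^ n) ≤ n * ν g := by
    intro g n
    induction n with
    | zero => simp [hν1]
    | succ n ih =>
      calc ν (g ^ (n + 1)) ≤ ν (g ^ n) + ν g := by
            simpa [pow_succ] using hν_mul (g ^ n) g
        _ ≤ n * ν g + ν g := by linarith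
        _ = (n + 1 : ℕ) * ν g := by push_cast; ring
  have hτ_le : ∀ g : G, τ g ≤ ν g := by
    intro g
    refine le_of_tendsto (hlim g) ?_
    filter_upwards [eventually_ge_atTop 1] with n hn
    rw [div_le_iff₀ (by exact_mod_cast hn)]
    calc ν (g ^ n) ≤ n * ν g := hpow g n
      _ = ν g * n := by ring
  have hτ_nonneg : ∀ g : G, 0 ≤ τ g := by
    intro g
    refine ge_of_tendsto (hlim g) ?_
    filter_upwards with n
    exact div_nonneg (hν_nonneg _) (Nat.cast_nonneg n)
  -- key inequality: ν ((a*b)^n) ≤ ν (a^n) + n * ν b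
  have hkey : ∀ (a b : G) (n : ℕ), ν ((a * b) ^ n) ≤ ν (a ^ n) + n * ν b := by
    intro a b n
    have hc : ∀ n : ℕ, ν ((a * b) ^ n * (a ^ n)⁻¹) ≤ n * ν b := by
      intro n
      induction n with
      | zero => simp [hν1]
      | succ n ih =>
        have hid : (a * b) ^ (n + 1) * (a ^ (n + 1))⁻¹
            = ((a * b) ^ n * (a ^ n)⁻¹) * (a ^ n * (a * b * a⁻¹) * (a ^ n)⁻¹) := by
          simp only [pow_succ, mul_inv_rev]
          group
        calc ν ((a * b) ^ (n + 1) * (a ^ (n + 1))⁻¹)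
            ≤ ν ((a * b) ^ n * (a ^ n)⁻¹) + ν (a ^ n * (a * b * a⁻¹) * (a ^ n)⁻¹) := by
              rw [hid]; exact hν_mul _ _
          _ = ν ((a * b) ^ n * (a ^ n)⁻¹) + ν b := by
              rw [hconjν (a ^ n) (a * b * a⁻¹), hconjν a b]
          _ ≤ n * ν b + ν b := by linarith
          _ = (n + 1 : ℕ) * ν b := by push_cast; ring
    calc ν ((a * b) ^ n) = ν (((a * b) ^ n * (a ^ n)⁻¹) * a ^ n) := by group
      _ ≤ ν ((a * b) ^ n * (a ^ n)⁻¹) + ν (a ^ n) := hν_mul _ _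
      _ ≤ n * ν b + ν (a ^ n) := by linarith [hc n]
      _ = ν (a ^ n) + n * ν b := by ring
  -- |τ (a*b) - τ a| ≤ ν b
  have hdiff : ∀ a b : G, |τ (a * b) - τ a| ≤ ν b := by
    intro a b
    have h1 : τ (a * b) ≤ τ a + ν b := by
      refine le_of_tendsto_of_tendsto' (hlim (a * b))
        ((hlim a).add tendsto_const_nhds) ?_
      intro n
      rcases Nat.eq_zero_or_pos n with rfl | hn
      · simp [hν_nonneg b]
      · have hn' : (0 : ℝ) < n := by exact_mod_cast hn
        rw [div_add' _ _ _ (ne_of_gt hn')]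
        rw [div_le_div_iff_of_pos_right hn']
        calc ν ((a * b) ^ n) ≤ ν (a ^ n) + n * ν b := hkey a b n
          _ = ν (a ^ n) + ν b * n := by ring
    have h2 : τ a ≤ τ (a * b) + ν b := by
      refine le_of_tendsto_of_tendsto' (hlim a)
        ((hlim (a * b)).add tendsto_const_nhds) ?_
      intro n
      rcases Nat.eq_zero_or_pos n with rfl | hn
      · simp [hν_nonneg b]
      · have hn' : (0 : ℝ) < n := by exact_mod_cast hn
        rw [div_add' _ _ _ (ne_of_gt hn')]
        rw [div_le_div_iff_of_pos_right hn']
        have := hkey (a * b) b⁻¹ n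
        simp only [mul_inv_cancel_right, hν_inv] at this
        calc ν (a ^ n) ≤ ν ((a * b) ^ n) + n * ν b := this
          _ = ν ((a * b) ^ n) + ν b * n := by ring
    rw [abs_sub_le_iff]
    constructor <;> linarith
  -- conjugation invariance of τ
  have hτ_conj : ∀ a b : G, τ (a * b) = τ (b * a) := by
    intro a b
    have hseq : ∀ n : ℕ, ν ((b * a) ^ n) = ν ((a * b) ^ n) := by
      intro n
      have : (b * a) ^ n = a⁻¹ * (a * b) ^ n * a := by
        have h := conj_pow (i := n) (a := a⁻¹) (b := a * b)
        rw [inv_inv] at h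
        rw [← h]
        group
      rw [this, hν_conj]
    have : Tendsto (fun n : ℕ => ν ((b * a) ^ n) / n) atTop (𝓝 (τ (a * b))) := by
      simpa only [hseq] using hlim (a * b)
    exact (tendsto_nhds_unique (hlim (b * a)) this).symm
  refine ⟨τ, hlim, ?_, ?_⟩
  · -- homogeneity
    intro g k
    rcases Nat.eq_zero_or_pos k with rfl | hk
    · have h0 : Tendsto (fun n : ℕ => ν ((g ^ 0 : G) ^ n) / n) atTop (𝓝 0) := by
        simpa [hν1] using tendsto_const_nhds (α := ℝ) (f := atTop (α := ℕ)) (a := 0)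
      simpa using tendsto_nhds_unique (hlim (g ^ 0)) h0
    · have hmul : Tendsto (fun n : ℕ => k * n) atTop atTop :=
        Tendsto.const_mul_atTop' hk tendsto_id
      have h1 : Tendsto (fun n : ℕ => ν (g ^ (k * n)) / (k * n : ℕ)) atTop (𝓝 (τ g)) :=
        (hlim g).comp hmul
      have h2 : Tendsto (fun n : ℕ => (k : ℝ) * (ν (g ^ (k * n)) / (k * n : ℕ))) atTop
          (𝓝 ((k : ℝ) * τ g)) := h1.const_mul _
      have heq : ∀ᶠ n : ℕ in atTop, (k : ℝ) * (ν (g ^ (k * n)) / (k * n : ℕ))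
          = ν ((g ^ k) ^ n) / n := by
        filter_upwards [eventually_ge_atTop 1] with n hn
        have hn' : (n : ℝ) ≠ 0 := by positivity
        have hk' : (k : ℝ) ≠ 0 := by positivity
        rw [← pow_mul]
        push_cast
        field_simp
      have h3 : Tendsto (fun n : ℕ => ν ((g ^ k) ^ n) / n) atTop (𝓝 ((k : ℝ) * τ g)) :=
        h2.congr' heq
      exact tendsto_nhds_unique (hlim (g ^ k)) h3
  · -- quasimorphism bound
    intro g h
    have hb1 : |τ g - τ (g * h) + τ h| ≤ 2 * ν h := by
      have d1 := hdiff g h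
      have := hτ_le h
      have := hτ_nonneg h
      rw [abs_sub_le_iff] at d1
      rw [abs_le]
      constructor <;> linarith [d1.1, d1.2]
    have hb2 : |τ g - τ (g * h) + τ h| ≤ 2 * ν g := by
      have hc : τ (g * h) = τ (h * g) := hτ_conj g h
      have d1 := hdiff h g
      have := hτ_le g
      have := hτ_nonneg g
      rw [abs_sub_le_iff] at d1
      rw [abs_le]
      constructor <;> [linarith [d1.1, d1.2]; linarith [d1.1, d1.2]]
    rcases le_total (ν g) (ν h) with hle | hle
    · rw [min_eq_left hle]
      linarith [hν_nonneg g]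
    · rw [min_eq_right hle]
      linarith [hν_nonneg h]
end

section
/- Let G be a group with a conjugation-invariant norm ν, let ω be a non-principal ultrafilter on ℕ, and let f : G → ℝ satisfy |f(g)| ≤ C·ν(g) for all g ∈ G and be a partial quasimorphism relative to ν with defect D ≥ 0. Let (g_n), (h_n) be sequences in G with ν(g_n) ≤ K·n and ν(h_n) ≤ K·n for all n ≥ 1 (some K > 0). Then the ultralimits A = lim_ω f(g_n)/n, B = lim_ω f(g_n h_n)/n, E = lim_ω f(h_n)/n, a = lim_ω ν(g_n)/n and b = lim_ω ν(h_n)/n all exist, and |A − B + E| ≤ D·min{a, b}. (This says that the induced function on the asymptotic cone of (G, ν) is a partial quasimorphism relative to the cone norm.) -/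
open Filter Topology

/-!
Dividing both `f` and `ν` by `n` preserves the partial-quasimorphism inequality, so it holds for
every term of the rescaled sequences (at `n = 0` all terms are `0` since `x / 0 = 0`). Linear
growth makes these sequences bounded, hence convergent along any ultrafilter by compactness of
`[-M, M]`, and the inequality passes to the limit.
-/

def IsPartialQuasimorphism {G : Type*} [Mul G] (ν f : G → ℝ) (D : ℝ) : Prop :=
  ∀ g h : G, |f g - f (g * h) + f h| ≤ D * min (ν g) (ν h)

namespace IsPartialQuasimorphism

variable {G : Type*} [Mul G] {ν f : G → ℝ} {D : ℝ}

lemma div_const (hf : IsPartialQuasimorphism ν f D) {c : ℝ} (hc : 0 ≤ c) :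
    IsPartialQuasimorphism (fun g => ν g / c) (fun g => f g / c) D := by
  intro g h
  calc |f g / c - f (g * h) / c + f h / c| = |f g - f (g * h) + f h| / c := by
        rw [div_sub_div_same, ← add_div, abs_div, abs_of_nonneg hc]
    _ ≤ D * min (ν g) (ν h) / c := div_le_div_of_nonneg_right (hf g h) hc
    _ = D * min (ν g / c) (ν h / c) := by rw [min_div_div_right hc, mul_div_assoc]

end IsPartialQuasimorphism

lemma abs_sub_add_le_mul_min_of_tendsto {α : Type*} {l : Filter α} [l.NeBot]
    {x y z u v : α → ℝ} {A B E a b D : ℝ}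
    (hx : Tendsto x l (𝓝 A)) (hy : Tendsto y l (𝓝 B)) (hz : Tendsto z l (𝓝 E))
    (hu : Tendsto u l (𝓝 a)) (hv : Tendsto v l (𝓝 b))
    (h : ∀ i, |x i - y i + z i| ≤ D * min (u i) (v i)) :
    |A - B + E| ≤ D * min a b :=
  le_of_tendsto_of_tendsto' ((hx.sub hy).add hz).abs ((hu.min hv).const_mul D) h

lemma Ultrafilter.exists_tendsto_of_abs_le {α : Type*} (ω : Ultrafilter α) {u : α → ℝ} {M : ℝ}
    (hu : ∀ i, |u i| ≤ M) : ∃ x, Tendsto u ω (𝓝 x) := by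
  obtain ⟨x, -, hx⟩ := (isCompact_Icc (a := -M) (b := M)).ultrafilter_le_nhds' (ω.map u)
    (Ultrafilter.mem_map.2 (univ_mem' fun i => abs_le.mp (hu i)))
  exact ⟨x, hx⟩

lemma Ultrafilter.exists_tendsto_div_natCast (ω : Ultrafilter ℕ) {u : ℕ → ℝ} {M : ℝ}
    (hu : ∀ n : ℕ, 1 ≤ n → |u n| ≤ M * n) : ∃ x, Tendsto (fun n : ℕ => u n / n) ω (𝓝 x) := by
  refine ω.exists_tendsto_of_abs_le (M := |M|) fun n => ?_
  rcases Nat.eq_zero_or_pos n with rfl | hn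
  · simp
  · have hn' : (0 : ℝ) < n := by exact_mod_cast hn
    rw [abs_div, Nat.abs_cast, div_le_iff₀ hn']
    exact (hu n hn).trans (mul_le_mul_of_nonneg_right (le_abs_self M) hn'.le)

theorem cone_function_partialQuasimorphism_general {G : Type*} [Group G] (ν : G → ℝ)
    (hν_nonneg : ∀ g : G, 0 ≤ ν g)
    (hν_mul : ∀ g h : G, ν (g * h) ≤ ν g + ν h)
    (ω : Ultrafilter ℕ)
    (f : G → ℝ) (C D : ℝ)
    (hf : ∀ g : G, |f g| ≤ C * ν g)
    (hpqm : ∀ g h : G, |f g - f (g * h) + f h| ≤ D * min (ν g) (ν h))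
    (g h : ℕ → G) (K : ℝ)
    (hg : ∀ n : ℕ, 1 ≤ n → ν (g n) ≤ K * n)
    (hh : ∀ n : ℕ, 1 ≤ n → ν (h n) ≤ K * n) :
    ∃ A B E a b : ℝ,
      Tendsto (fun n : ℕ => f (g n) / n) (↑ω : Filter ℕ) (𝓝 A) ∧
      Tendsto (fun n : ℕ => f (g n * h n) / n) (↑ω : Filter ℕ) (𝓝 B) ∧
      Tendsto (fun n : ℕ => f (h n) / n) (↑ω : Filter ℕ) (𝓝 E) ∧
      Tendsto (fun n : ℕ => ν (g n) / n) (↑ω : Filter ℕ) (𝓝 a) ∧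
      Tendsto (fun n : ℕ => ν (h n) / n) (↑ω : Filter ℕ) (𝓝 b) ∧
      |A - B + E| ≤ D * min a b := by
  have hgh (n : ℕ) (hn : 1 ≤ n) : ν (g n * h n) ≤ (K + K) * n := by
    linarith [hν_mul (g n) (h n), hg n hn, hh n hn]
  have growth_ν {k : ℕ → G} {L : ℝ} (hk : ∀ n : ℕ, 1 ≤ n → ν (k n) ≤ L * n) (n : ℕ) (hn : 1 ≤ n) :
      |ν (k n)| ≤ L * n := (abs_of_nonneg (hν_nonneg _)).trans_le (hk n hn)
  have growth_f {k : ℕ → G} {L : ℝ} (hk : ∀ n : ℕ, 1 ≤ n → ν (k n) ≤ L * n) (n : ℕ) (hn : 1 ≤ n) :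
      |f (k n)| ≤ |C| * L * n := by
    calc |f (k n)| ≤ |C| * ν (k n) := (hf _).trans (by gcongr; exacts [hν_nonneg _, le_abs_self C])
      _ ≤ |C| * L * n := by rw [mul_assoc]; gcongr; exact hk n hn
  obtain ⟨A, hA⟩ := ω.exists_tendsto_div_natCast (growth_f hg)
  obtain ⟨B, hB⟩ := ω.exists_tendsto_div_natCast (growth_f hgh)
  obtain ⟨E, hE⟩ := ω.exists_tendsto_div_natCast (growth_f hh)
  obtain ⟨a, ha⟩ := ω.exists_tendsto_div_natCast (growth_ν hg)
  obtain ⟨b, hb⟩ := ω.exists_tendsto_div_natCast (growth_ν hh)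
  exact ⟨A, B, E, a, b, hA, hB, hE, ha, hb, abs_sub_add_le_mul_min_of_tendsto hA hB hE ha hb
    fun n => IsPartialQuasimorphism.div_const hpqm n.cast_nonneg (g n) (h n)⟩

/-- Let `ν` be a conjugation-invariant norm on `G`, `f` a partial quasimorphism relative
to `ν` with defect `D ≥ 0` and `|f(g)| ≤ C·ν(g)`, and `ω` a non-principal ultrafilter.
For sequences `(gₙ)`, `(hₙ)` with `ν(gₙ), ν(hₙ) ≤ K·n` the ultralimits
`A = lim_ω f(gₙ)/n`, `B = lim_ω f(gₙhₙ)/n`, `E = lim_ω f(hₙ)/n`, `a = lim_ω ν(gₙ)/n`,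
`b = lim_ω ν(hₙ)/n` exist and `|A − B + E| ≤ D·min{a, b}`: the induced function on the
asymptotic cone is a partial quasimorphism. -/
theorem cone_function_partialQuasimorphism {G : Type*} [Group G] (ν : G → ℝ)
    (hν_nonneg : ∀ g : G, 0 ≤ ν g)
    (hν_zero : ∀ g : G, ν g = 0 ↔ g = 1)
    (hν_inv : ∀ g : G, ν g⁻¹ = ν g)
    (hν_mul : ∀ g h : G, ν (g * h) ≤ ν g + ν h)
    (hν_conj : ∀ g h : G, ν (h⁻¹ * g * h) = ν g)
    (ω : Ultrafilter ℕ) (hω : (↑ω : Filter ℕ) ≤ Filter.cofinite)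
    (f : G → ℝ) (C D : ℝ)
    (hf : ∀ g : G, |f g| ≤ C * ν g) (hD : 0 ≤ D)
    (hpqm : ∀ g h : G, |f g - f (g * h) + f h| ≤ D * min (ν g) (ν h))
    (g h : ℕ → G) (K : ℝ) (hK : 0 < K)
    (hg : ∀ n : ℕ, 1 ≤ n → ν (g n) ≤ K * n)
    (hh : ∀ n : ℕ, 1 ≤ n → ν (h n) ≤ K * n) :
    ∃ A B E a b : ℝ,
      Tendsto (fun n : ℕ => f (g n) / n) (↑ω : Filter ℕ) (𝓝 A) ∧
      Tendsto (fun n : ℕ => f (g n * h n) / n) (↑ω : Filter ℕ) (𝓝 B) ∧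
      Tendsto (fun n : ℕ => f (h n) / n) (↑ω : Filter ℕ) (𝓝 E) ∧
      Tendsto (fun n : ℕ => ν (g n) / n) (↑ω : Filter ℕ) (𝓝 a) ∧
      Tendsto (fun n : ℕ => ν (h n) / n) (↑ω : Filter ℕ) (𝓝 b) ∧
      |A - B + E| ≤ D * min a b :=
  cone_function_partialQuasimorphism_general ν hν_nonneg hν_mul ω f C D hf hpqm g h K hg hh
end

section
/- Let G be a group with a conjugation-invariant norm ν, let ω be a non-principal ultrafilter on ℕ, and let f : G → ℝ satisfy |f(g)| ≤ C·ν(g) for all g ∈ G. Suppose there is an increasing function φ : [0,∞) → [0,∞) with φ(t)/t → 0 as t → ∞ such that |f(g) − f(gh) + f(h)| ≤ φ(ν(g) + ν(h)) for all g, h ∈ G. Then for all sequences (g_n), (h_n) in G with ν(g_n) ≤ K·n and ν(h_n) ≤ K·n for all n ≥ 1 (some K > 0), one has lim_ω f(g_n h_n)/n = lim_ω f(g_n)/n + lim_ω f(h_n)/n (all three ultralimits existing). (This says that the induced function on the asymptotic cone of (G, ν) is a group homomorphism to ℝ.) -/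
open Filter Topology

/-!
The quotients `f(gₙ)/n` are bounded by `max C 0 · K`, so their ultralimits exist by compactness
of a closed interval. The defect `f(gₙhₙ) − f(gₙ) − f(hₙ)` is bounded by `φ(2Kn)`, which is
`o(n)`, so after division by `n` it vanishes along `ω`.
-/

theorem Ultrafilter.exists_tendsto_div_natCast_of_abs_le (ω : Ultrafilter ℕ)
    (hω : (ω : Filter ℕ) ≤ atTop) (a : ℕ → ℝ) (M : ℝ) (ha : ∀ n : ℕ, 1 ≤ n → |a n| ≤ M * n) :
    ∃ L, Tendsto (fun n : ℕ => a n / n) ω (𝓝 L) := by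
  have hbounded : ∀ᶠ n in (ω : Filter ℕ), a n / n ∈ Set.Icc (-M) M := by
    filter_upwards [hω (eventually_ge_atTop 1)] with n hn
    have hn0 : (0 : ℝ) < n := by exact_mod_cast hn
    rw [Set.mem_Icc, ← abs_le, abs_div, Nat.abs_cast, div_le_iff₀ hn0]
    exact ha n hn
  obtain ⟨L, -, hL⟩ := isCompact_Icc.ultrafilter_le_nhds (ω.map fun n => a n / n)
    (le_principal_iff.mpr (Ultrafilter.mem_map.mpr hbounded))
  exact ⟨L, hL⟩

theorem tendsto_comp_const_mul_natCast_div {φ : ℝ → ℝ}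
    (hφ : Tendsto (fun t : ℝ => φ t / t) atTop (𝓝 0)) {c : ℝ} (hc : 0 < c) :
    Tendsto (fun n : ℕ => φ (c * n) / n) atTop (𝓝 0) := by
  have hcn : Tendsto (fun n : ℕ => c * (n : ℝ)) atTop atTop :=
    tendsto_natCast_atTop_atTop.const_mul_atTop hc
  have key := ((hφ.comp hcn).const_mul c)
  rw [mul_zero] at key
  refine key.congr' ?_
  filter_upwards [eventually_ge_atTop 1] with n hn
  have hn0 : (n : ℝ) ≠ 0 := by positivity
  simp only [Function.comp_apply]
  field_simp

theorem tendsto_div_natCast_zero_of_abs_le {φ : ℝ → ℝ}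
    (hφ : Tendsto (fun t : ℝ => φ t / t) atTop (𝓝 0)) {c : ℝ} (hc : 0 < c) (a : ℕ → ℝ)
    (ha : ∀ n : ℕ, 1 ≤ n → |a n| ≤ φ (c * n)) :
    Tendsto (fun n : ℕ => a n / n) atTop (𝓝 0) := by
  refine squeeze_zero_norm' ?_ (tendsto_comp_const_mul_natCast_div hφ hc)
  filter_upwards [eventually_ge_atTop 1] with n hn
  rw [Real.norm_eq_abs, abs_div, Nat.abs_cast]
  gcongr
  exact ha n hn

theorem abs_le_max_mul_of_le {G : Type*} {ν f : G → ℝ} {C : ℝ} (hν : ∀ g, 0 ≤ ν g)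
    (hf : ∀ g, |f g| ≤ C * ν g) {g : G} {r : ℝ} (hr : ν g ≤ r) : |f g| ≤ max C 0 * r :=
  calc |f g| ≤ C * ν g := hf g
    _ ≤ max C 0 * ν g := by gcongr; exacts [hν g, le_max_left C 0]
    _ ≤ max C 0 * r := by gcongr

theorem cone_function_homomorphism_general {G : Type*} [Group G] (ν : G → ℝ)
    (hν_nonneg : ∀ g : G, 0 ≤ ν g)
    (ω : Ultrafilter ℕ) (hω : (↑ω : Filter ℕ) ≤ Filter.cofinite)
    (f : G → ℝ) (C : ℝ)
    (hf : ∀ g : G, |f g| ≤ C * ν g)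
    (φ : ℝ → ℝ)
    (hmono : ∀ s t : ℝ, 0 ≤ s → s ≤ t → φ s ≤ φ t)
    (hφ : Tendsto (fun t : ℝ => φ t / t) atTop (𝓝 0))
    (hdef : ∀ g h : G, |f g - f (g * h) + f h| ≤ φ (ν g + ν h)) :
    ∀ (g h : ℕ → G) (K : ℝ), 0 < K →
      (∀ n : ℕ, 1 ≤ n → ν (g n) ≤ K * n) →
      (∀ n : ℕ, 1 ≤ n → ν (h n) ≤ K * n) →
      ∃ A E : ℝ,
        Tendsto (fun n : ℕ => f (g n) / n) (↑ω : Filter ℕ) (𝓝 A) ∧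
        Tendsto (fun n : ℕ => f (h n) / n) (↑ω : Filter ℕ) (𝓝 E) ∧
        Tendsto (fun n : ℕ => f (g n * h n) / n) (↑ω : Filter ℕ) (𝓝 (A + E)) := by
  intro g h K hK hg hh
  have hω' : (ω : Filter ℕ) ≤ atTop := Nat.cofinite_eq_atTop ▸ hω
  have hlinear (u : ℕ → G) (hu : ∀ n : ℕ, 1 ≤ n → ν (u n) ≤ K * n) (n : ℕ) (hn : 1 ≤ n) :
      |f (u n)| ≤ max C 0 * K * n := by
    rw [mul_assoc]
    exact abs_le_max_mul_of_le hν_nonneg hf (hu n hn)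
  obtain ⟨A, hA⟩ := ω.exists_tendsto_div_natCast_of_abs_le hω' _ _ (hlinear g hg)
  obtain ⟨E, hE⟩ := ω.exists_tendsto_div_natCast_of_abs_le hω' _ _ (hlinear h hh)
  refine ⟨A, E, hA, hE, ?_⟩
  have hdefect : Tendsto (fun n : ℕ => (f (g n * h n) - f (g n) - f (h n)) / n) ω (𝓝 0) := by
    refine (tendsto_div_natCast_zero_of_abs_le hφ (by positivity : (0 : ℝ) < 2 * K) _
      fun n hn => ?_).mono_left hω'
    calc |f (g n * h n) - f (g n) - f (h n)| = |f (g n) - f (g n * h n) + f (h n)| := by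
          rw [← abs_neg]; ring_nf
      _ ≤ φ (ν (g n) + ν (h n)) := hdef (g n) (h n)
      _ ≤ φ (2 * K * n) :=
          hmono _ _ (add_nonneg (hν_nonneg _) (hν_nonneg _)) (by linarith [hg n hn, hh n hn])
  simpa [sub_div] using (hA.add hE).add hdefect

/-- Let `ν` be a conjugation-invariant norm on `G`, `f : G → ℝ` with `|f(g)| ≤ C·ν(g)`,
and suppose `|f(g) − f(gh) + f(h)| ≤ φ(ν(g) + ν(h))` for an increasing `φ ≥ 0` with
`φ(t)/t → 0`. Then for all sequences `(gₙ)`, `(hₙ)` of at most linear growth the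
ultralimits along a non-principal ultrafilter satisfy
`lim_ω f(gₙhₙ)/n = lim_ω f(gₙ)/n + lim_ω f(hₙ)/n`: the induced function on the asymptotic
cone is a homomorphism to `ℝ`. -/
theorem cone_function_homomorphism {G : Type*} [Group G] (ν : G → ℝ)
    (hν_nonneg : ∀ g : G, 0 ≤ ν g)
    (hν_zero : ∀ g : G, ν g = 0 ↔ g = 1)
    (hν_inv : ∀ g : G, ν g⁻¹ = ν g)
    (hν_mul : ∀ g h : G, ν (g * h) ≤ ν g + ν h)
    (hν_conj : ∀ g h : G, ν (h⁻¹ * g * h) = ν g)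
    (ω : Ultrafilter ℕ) (hω : (↑ω : Filter ℕ) ≤ Filter.cofinite)
    (f : G → ℝ) (C : ℝ)
    (hf : ∀ g : G, |f g| ≤ C * ν g)
    (φ : ℝ → ℝ)
    (hmono : ∀ s t : ℝ, 0 ≤ s → s ≤ t → φ s ≤ φ t)
    (hnonneg : ∀ t : ℝ, 0 ≤ t → 0 ≤ φ t)
    (hφ : Tendsto (fun t : ℝ => φ t / t) atTop (𝓝 0))
    (hdef : ∀ g h : G, |f g - f (g * h) + f h| ≤ φ (ν g + ν h)) :
    ∀ (g h : ℕ → G) (K : ℝ), 0 < K →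
      (∀ n : ℕ, 1 ≤ n → ν (g n) ≤ K * n) →
      (∀ n : ℕ, 1 ≤ n → ν (h n) ≤ K * n) →
      ∃ A E : ℝ,
        Tendsto (fun n : ℕ => f (g n) / n) (↑ω : Filter ℕ) (𝓝 A) ∧
        Tendsto (fun n : ℕ => f (h n) / n) (↑ω : Filter ℕ) (𝓝 E) ∧
        Tendsto (fun n : ℕ => f (g n * h n) / n) (↑ω : Filter ℕ) (𝓝 (A + E)) :=
  cone_function_homomorphism_general ν hν_nonneg ω hω f C hf φ hmono hφ hdef
end
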